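/- arXiv:1503.00225 — 7 statements merged into one kernel-verified Lean document; each statement's English description precedes it below -/
import Mathlib

section
/- Let L > 0 and λ > 0. Let w : ℝ × ℝ → ℝ be a smooth (C^∞) function such that for all t ≥ 0 and x ∈ [0,L] it satisfies ∂_t w + ∂_x w + ∂_x^3 w + λ w = 0, together with the boundary conditions w(t,0) = 0, w(t,L) = 0, ∂_x w(t,L) = 0 for all t ≥ 0. Then for every t ≥ 0, d/dt ∫₀ᴸ w(t,x)² dx = −(∂_x w(t,0))² − 2λ ∫₀ᴸ w(t,x)² dx. -/
open MeasureTheory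

/-- For the target system `w_t + w_x + w_xxx + λ w = 0` on `[0,L]` with boundary conditions
`w(t,0) = w(t,L) = w_x(t,L) = 0`, the Lyapunov identity
`d/dt ∫₀ᴸ w² dx = -(w_x(t,0))² - 2λ ∫₀ᴸ w² dx` holds for every `t ≥ 0`. -/
theorem target_system_lyapunov_identity
    (L lam : ℝ) (hL : 0 < L) (hlam : 0 < lam)
    (w : ℝ → ℝ → ℝ) (hw : ContDiff ℝ (⊤ : ℕ∞) (Function.uncurry w))
    (hpde : ∀ t ≥ (0:ℝ), ∀ x ∈ Set.Icc (0:ℝ) L,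
      deriv (fun s => w s x) t + deriv (fun y => w t y) x
        + iteratedDeriv 3 (fun y => w t y) x + lam * w t x = 0)
    (hbc0 : ∀ t ≥ (0:ℝ), w t 0 = 0)
    (hbcL : ∀ t ≥ (0:ℝ), w t L = 0)
    (hbcxL : ∀ t ≥ (0:ℝ), deriv (fun y => w t y) L = 0) :
    ∀ t ≥ (0:ℝ),
      HasDerivAt (fun s => ∫ x in (0:ℝ)..L, (w s x) ^ 2)
        (-(deriv (fun y => w t y) 0) ^ 2 - 2 * lam * ∫ x in (0:ℝ)..L, (w t x) ^ 2) t := by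
  intro t ht
  -- partial t derivative
  set W' : ℝ × ℝ → ℝ := fun p => fderiv ℝ (Function.uncurry w) p (1, 0) with hW'def
  have hwd : Differentiable ℝ (Function.uncurry w) := hw.differentiable (by simp)
  have hW'cont : Continuous W' := by
    have h1 : ContDiff ℝ 0 (fderiv ℝ (Function.uncurry w)) :=
      hw.fderiv_right (m := 0) (by simp)
    exact h1.continuous.clm_apply continuous_const
  have hwt : ∀ s x : ℝ, HasDerivAt (fun s => w s x) (W' (s, x)) s := by
    intro s x
    have hc : HasDerivAt (fun s : ℝ => (s, x)) ((1:ℝ), (0:ℝ)) s :=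
      (hasDerivAt_id s).prodMk (hasDerivAt_const s x)
    exact (hwd (s, x)).hasFDerivAt.comp_hasDerivAt s hc
  have hwcont : Continuous (Function.uncurry w) := hw.continuous
  -- F and F'
  set F : ℝ → ℝ → ℝ := fun s x => (w s x) ^ 2 with hFdef
  set F' : ℝ → ℝ → ℝ := fun s x => 2 * w s x * W' (s, x) with hF'def
  have hFcont : ∀ s, Continuous (F s) := by
    intro s
    exact ((hwcont.comp (continuous_const.prodMk continuous_id)).pow 2)
  have hF'cont : ∀ s, Continuous (F' s) := by
    intro s
    have h1 : Continuous fun x : ℝ => ((s, x) : ℝ × ℝ) := continuous_const.prodMk continuous_id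
    exact (continuous_const.mul (hwcont.comp h1)).mul (hW'cont.comp h1)
  have hFdiff : ∀ s x : ℝ, HasDerivAt (fun s => F s x) (F' s x) s := by
    intro s x
    have := ((hwt s x).mul (hwt s x))
    have h2 : HasDerivAt (fun s => w s x * w s x)
        (W' (s, x) * w s x + w s x * W' (s, x)) s := (hwt s x).mul (hwt s x)
    have h3 : HasDerivAt (fun s => F s x) (W' (s, x) * w s x + w s x * W' (s, x)) s := by
      simpa [hFdef, pow_two] using h2
    convert h3 using 1
    ring
  -- bound on compact set
  obtain ⟨C, hC⟩ : ∃ C, ∀ p ∈ (Set.Icc (t - 1) (t + 1) ×ˢ Set.Icc (0:ℝ) L),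
      ‖2 * w p.1 p.2 * W' p‖ ≤ C := by
    apply IsCompact.exists_bound_of_continuousOn (isCompact_Icc.prod isCompact_Icc)
    exact ((continuous_const.mul hwcont).mul hW'cont).continuousOn
  have hbound : ∀ x : ℝ, x ∈ Set.uIoc (0:ℝ) L → ∀ s ∈ Metric.ball t 1, ‖F' s x‖ ≤ C := by
    intro x hx s hs
    have hx' : x ∈ Set.Icc (0:ℝ) L := by
      rw [Set.uIoc_of_le hL.le] at hx
      exact ⟨hx.1.le, hx.2⟩
    have := Metric.mem_ball.mp hs
    rw [Real.dist_eq] at this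
    have habs := abs_le.mp this.le
    have hs' : s ∈ Set.Icc (t - 1) (t + 1) := ⟨by linarith [habs.1], by linarith [habs.2]⟩
    exact hC (s, x) ⟨hs', hx'⟩
  have hdiffae : ∀ x : ℝ, x ∈ Set.uIoc (0:ℝ) L → ∀ s ∈ Metric.ball t 1,
      HasDerivAt (fun s => F s x) (F' s x) s := fun x _ s _ => hFdiff s x
  have key := intervalIntegral.hasDerivAt_integral_of_dominated_loc_of_deriv_le
    (Metric.ball_mem_nhds t one_pos)
    (Filter.Eventually.of_forall fun s => ((hFcont s).aestronglyMeasurable))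
    ((hFcont t).intervalIntegrable 0 L)
    ((hF'cont t).aestronglyMeasurable)
    (Filter.Eventually.of_forall hbound)
    (intervalIntegrable_const (μ := MeasureTheory.volume))
    (Filter.Eventually.of_forall hdiffae)
  -- compute the value of the integral of F' t
  have h1top : (1:WithTop ℕ∞) ≤ ((⊤:ℕ∞):WithTop ℕ∞) := by exact_mod_cast le_top
  set f : ℝ → ℝ := fun y => w t y with hfdef
  have hf : ContDiff ℝ ((⊤:ℕ∞):WithTop ℕ∞) f :=
    (hw.comp (contDiff_const.prodMk contDiff_id)).of_le (by simp)
  set f1 : ℝ → ℝ := deriv f with hf1def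
  have hf1 : ContDiff ℝ ((⊤:ℕ∞):WithTop ℕ∞) f1 := (contDiff_infty_iff_deriv.mp hf).2
  set f2 : ℝ → ℝ := deriv f1 with hf2def
  have hf2 : ContDiff ℝ ((⊤:ℕ∞):WithTop ℕ∞) f2 := (contDiff_infty_iff_deriv.mp hf1).2
  set f3 : ℝ → ℝ := deriv f2 with hf3def
  have hf3 : ContDiff ℝ ((⊤:ℕ∞):WithTop ℕ∞) f3 := (contDiff_infty_iff_deriv.mp hf2).2
  have hdf : ∀ x, HasDerivAt f (f1 x) x := fun x => (hf.differentiable (by simp) x).hasDerivAt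
  have hdf1 : ∀ x, HasDerivAt f1 (f2 x) x := fun x => (hf1.differentiable (by simp) x).hasDerivAt
  have hdf2 : ∀ x, HasDerivAt f2 (f3 x) x := fun x => (hf2.differentiable (by simp) x).hasDerivAt
  have hiter : ∀ x, iteratedDeriv 3 f x = f3 x := by
    intro x
    simp [iteratedDeriv_succ, iteratedDeriv_zero, hf1def, hf2def, hf3def]
  -- G and its derivative
  set G : ℝ → ℝ := fun x => (f x) ^ 2 + 2 * f x * f2 x - (f1 x) ^ 2 with hGdef
  have hdG : ∀ x, HasDerivAt G (2 * f x * f1 x + 2 * f x * f3 x) x := by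
    intro x
    have h1 : HasDerivAt (fun y => (f y) ^ 2) (2 * f x ^ 1 * f1 x) x := (hdf x).pow 2
    have h2 : HasDerivAt (fun y => 2 * f y * f2 y)
        ((2 * f1 x) * f2 x + (2 * f x) * f3 x) x :=
      ((hdf x).const_mul 2).mul (hdf2 x)
    have h3 : HasDerivAt (fun y => (f1 y) ^ 2) (2 * f1 x ^ 1 * f2 x) x := (hdf1 x).pow 2
    have : HasDerivAt G (2 * f x ^ 1 * f1 x + (2 * f1 x * f2 x + 2 * f x * f3 x)
        - 2 * f1 x ^ 1 * f2 x) x := (h1.add h2).sub h3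
    convert this using 1
    ring
  have hcontG' : Continuous fun x => 2 * f x * f1 x + 2 * f x * f3 x :=
    ((continuous_const.mul hf.continuous).mul hf1.continuous).add
      ((continuous_const.mul hf.continuous).mul hf3.continuous)
  have hintG' : IntervalIntegrable (fun x => 2 * f x * f1 x + 2 * f x * f3 x) volume 0 L :=
    hcontG'.intervalIntegrable 0 L
  have hG : ∫ x in (0:ℝ)..L, (2 * f x * f1 x + 2 * f x * f3 x) = G L - G 0 :=
    intervalIntegral.integral_eq_sub_of_hasDerivAt (fun x _ => hdG x) hintG'
  -- pointwise identity on [0,L]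
  have hEq : Set.EqOn (F' t)
      (fun x => -(2 * f x * f1 x + 2 * f x * f3 x) - 2 * lam * (f x) ^ 2)
      (Set.uIcc 0 L) := by
    intro x hx
    rw [Set.uIcc_of_le hL.le] at hx
    have hp := hpde t ht x hx
    have hderiv : deriv (fun s => w s x) t = W' (t, x) := (hwt t x).deriv
    rw [hderiv, hiter x] at hp
    have : W' (t, x) = -(f1 x + f3 x + lam * f x) := by
      have hfx : deriv (fun y => w t y) x = f1 x := rfl
      rw [hfx] at hp
      linarith
    simp only [hF'def]
    rw [this]
    have hfx2 : w t x = f x := rfl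
    rw [hfx2]; ring
  have hint1 : IntervalIntegrable
      (fun x => -(2 * f x * f1 x + 2 * f x * f3 x)) volume 0 L := hintG'.neg
  have hint2 : IntervalIntegrable (fun x => 2 * lam * (f x) ^ 2) volume 0 L :=
    (continuous_const.mul (hf.continuous.pow 2)).intervalIntegrable 0 L
  have hval : ∫ x in (0:ℝ)..L, F' t x
      = -(deriv (fun y => w t y) 0) ^ 2 - 2 * lam * ∫ x in (0:ℝ)..L, (w t x) ^ 2 := by
    rw [intervalIntegral.integral_congr hEq]
    rw [intervalIntegral.integral_sub hint1 hint2]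
    rw [intervalIntegral.integral_neg, hG]
    rw [intervalIntegral.integral_const_mul]
    have hGL : G L = 0 := by
      simp [hGdef, show f L = 0 from hbcL t ht, show f1 L = 0 from hbcxL t ht]
    have hG0 : G 0 = -(f1 0) ^ 2 := by
      simp [hGdef, show f 0 = 0 from hbc0 t ht]
    rw [hGL, hG0]
    have : deriv (fun y => w t y) 0 = f1 0 := rfl
    rw [this]
    ring_nf
    rfl
  rw [← hval]
  exact key.2
end

section
/- Let L > 0 and λ > 0. Let w : ℝ × ℝ → ℝ be a smooth (C^∞) function satisfying, for all t ≥ 0 and x ∈ [0,L], ∂_t w + ∂_x w + ∂_x^3 w + λ w = 0, with boundary conditions w(t,0) = w(t,L) = 0 and ∂_x w(t,L) = 0 for all t ≥ 0. Then for all t ≥ 0, ∫₀ᴸ w(t,x)² dx ≤ e^{−2λt} ∫₀ᴸ w(0,x)² dx. -/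
open MeasureTheory

section Aux

open Set intervalIntegral

private lemma aux_slice_smooth {w : ℝ → ℝ → ℝ} (hw : ContDiff ℝ (⊤ : ℕ∞) (Function.uncurry w))
    (t : ℝ) : ContDiff ℝ ((⊤ : ℕ∞) : WithTop ℕ∞) (fun y => w t y) :=
  (hw.of_le (by simp)).comp (contDiff_const.prodMk contDiff_id)

private lemma aux_hasDerivAt_t {w : ℝ → ℝ → ℝ} (hw : ContDiff ℝ (⊤ : ℕ∞) (Function.uncurry w))
    (t x : ℝ) :
    HasDerivAt (fun s => w s x) (fderiv ℝ (Function.uncurry w) (t, x) (1, 0)) t := by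
  have h1 : HasDerivAt (fun s : ℝ => (s, x)) ((1 : ℝ), (0 : ℝ)) t :=
    (hasDerivAt_id t).prodMk (hasDerivAt_const t x)
  exact ((hw.differentiable (by simp) (t, x)).hasFDerivAt).comp_hasDerivAt t h1

private lemma aux_D_cont {w : ℝ → ℝ → ℝ} (hw : ContDiff ℝ (⊤ : ℕ∞) (Function.uncurry w)) :
    Continuous (fun p : ℝ × ℝ => fderiv ℝ (Function.uncurry w) p ((1 : ℝ), (0 : ℝ))) := by
  have h : Continuous (fun p : ℝ × ℝ => fderiv ℝ (Function.uncurry w) p) :=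
    hw.continuous_fderiv (by simp)
  exact (ContinuousLinearMap.apply ℝ ℝ ((1 : ℝ), (0 : ℝ))).continuous.comp h

/-- Derivative of the energy under the integral sign. -/
private lemma aux_energy_hasDeriv {L : ℝ} {w : ℝ → ℝ → ℝ}
    (hw : ContDiff ℝ (⊤ : ℕ∞) (Function.uncurry w)) (t₀ : ℝ) :
    HasDerivAt (fun t => ∫ x in (0:ℝ)..L, (w t x) ^ 2)
      (∫ x in (0:ℝ)..L,
        2 * w t₀ x * fderiv ℝ (Function.uncurry w) (t₀, x) ((1:ℝ), (0:ℝ))) t₀ := by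
  set D : ℝ → ℝ → ℝ := fun s x => fderiv ℝ (Function.uncurry w) (s, x) ((1:ℝ), (0:ℝ)) with hD
  have hDc : Continuous (fun p : ℝ × ℝ => D p.1 p.2) := aux_D_cont hw
  have hwc : Continuous (fun p : ℝ × ℝ => w p.1 p.2) := by
    have := hw.continuous; exact this
  have hF'c : Continuous (fun p : ℝ × ℝ => 2 * w p.1 p.2 * D p.1 p.2) := by
    continuity
  -- bound on a compact set
  obtain ⟨C, hC⟩ : ∃ C, ∀ p ∈ (Metric.closedBall t₀ 1) ×ˢ (uIcc (0:ℝ) L),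
      ‖2 * w p.1 p.2 * D p.1 p.2‖ ≤ C :=
    ((isCompact_closedBall t₀ 1).prod isCompact_uIcc).exists_bound_of_continuousOn
      hF'c.continuousOn
  have key := intervalIntegral.hasDerivAt_integral_of_dominated_loc_of_deriv_le
    (μ := volume) (F := fun s x => (w s x) ^ 2) (F' := fun s x => 2 * w s x * D s x)
    (x₀ := t₀) (a := 0) (b := L) (bound := fun _ => C) (s := Metric.ball t₀ 1) (Metric.ball_mem_nhds t₀ one_pos)
    (Filter.Eventually.of_forall fun s =>
      (Continuous.aestronglyMeasurable (by fun_prop)))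
    ((by fun_prop : Continuous fun x => (w t₀ x) ^ 2).intervalIntegrable 0 L)
    (Continuous.aestronglyMeasurable (by fun_prop))
    (Filter.Eventually.of_forall fun x hx s hs => by
      exact hC (s, x) ⟨Metric.ball_subset_closedBall hs, uIoc_subset_uIcc hx⟩)
    (intervalIntegrable_const)
    (Filter.Eventually.of_forall fun x hx s hs => by
      have h := (aux_hasDerivAt_t hw s x).fun_pow 2
      simpa [pow_one, mul_comm, mul_assoc, mul_left_comm] using h)
  exact key.2

/-- `∫ 2 g g' = g L ^ 2 - g 0 ^ 2` for smooth `g`. -/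
private lemma aux_int_two_mul_self_deriv {a b : ℝ} (g : ℝ → ℝ)
    (hg : ContDiff ℝ ((⊤ : ℕ∞) : WithTop ℕ∞) g) :
    ∫ x in a..b, 2 * g x * deriv g x = g b ^ 2 - g a ^ 2 := by
  have hg' : ContDiff ℝ ((⊤ : ℕ∞) : WithTop ℕ∞) (deriv g) := (contDiff_infty_iff_deriv.mp hg).2
  have hderiv : ∀ x ∈ uIcc a b, HasDerivAt (fun y => g y ^ 2) (2 * g x * deriv g x) x := by
    intro x _
    have h := ((hg.differentiable (by simp) x).hasDerivAt).fun_pow 2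
    simpa [pow_one, mul_comm, mul_assoc, mul_left_comm] using h
  exact integral_eq_sub_of_hasDerivAt hderiv
    (((continuous_const.mul hg.continuous).mul hg'.continuous).intervalIntegrable a b)

end Aux

/-- For the target system `w_t + w_x + w_xxx + λ w = 0` on `[0,L]` with boundary conditions
`w(t,0) = w(t,L) = w_x(t,L) = 0`, the `L²` norm decays exponentially with rate `λ`:
`∫₀ᴸ w(t,x)² dx ≤ e^{-2λt} ∫₀ᴸ w(0,x)² dx` for every `t ≥ 0`. -/
theorem target_system_exponential_decay
    (L lam : ℝ) (hL : 0 < L) (hlam : 0 < lam)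
    (w : ℝ → ℝ → ℝ) (hw : ContDiff ℝ (⊤ : ℕ∞) (Function.uncurry w))
    (hpde : ∀ t ≥ (0:ℝ), ∀ x ∈ Set.Icc (0:ℝ) L,
      deriv (fun s => w s x) t + deriv (fun y => w t y) x
        + iteratedDeriv 3 (fun y => w t y) x + lam * w t x = 0)
    (hbc0 : ∀ t ≥ (0:ℝ), w t 0 = 0)
    (hbcL : ∀ t ≥ (0:ℝ), w t L = 0)
    (hbcxL : ∀ t ≥ (0:ℝ), deriv (fun y => w t y) L = 0) :
    ∀ t ≥ (0:ℝ),
      (∫ x in (0:ℝ)..L, (w t x) ^ 2)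
        ≤ Real.exp (-2 * lam * t) * ∫ x in (0:ℝ)..L, (w 0 x) ^ 2 := by
  intro t ht
  set E : ℝ → ℝ := fun s => ∫ x in (0:ℝ)..L, (w s x) ^ 2 with hE
  set D : ℝ → ℝ → ℝ :=
    fun s x => fderiv ℝ (Function.uncurry w) (s, x) ((1:ℝ), (0:ℝ)) with hD
  set I : ℝ → ℝ := fun s => ∫ x in (0:ℝ)..L, 2 * w s x * D s x with hI
  have hE' : ∀ s, HasDerivAt E (I s) s := fun s => aux_energy_hasDeriv hw s
  -- the key energy estimate
  have hkey : ∀ s ≥ (0:ℝ), I s ≤ -2 * lam * E s := by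
    intro s hs
    set f : ℝ → ℝ := fun y => w s y with hf
    have hfc : ContDiff ℝ ((⊤ : ℕ∞) : WithTop ℕ∞) f := aux_slice_smooth hw s
    have hle : (1 : WithTop ℕ∞) ≤ ((⊤ : ℕ∞) : WithTop ℕ∞) := by exact_mod_cast le_top
    have hf1 : ContDiff ℝ ((⊤ : ℕ∞) : WithTop ℕ∞) (deriv f) := (contDiff_infty_iff_deriv.mp hfc).2
    have hf2 : ContDiff ℝ ((⊤ : ℕ∞) : WithTop ℕ∞) (deriv (deriv f)) := (contDiff_infty_iff_deriv.mp hf1).2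
    have hf3 : ContDiff ℝ ((⊤ : ℕ∞) : WithTop ℕ∞) (deriv (deriv (deriv f))) := (contDiff_infty_iff_deriv.mp hf2).2
    have hiter : ∀ x, iteratedDeriv 3 f x = deriv (deriv (deriv f)) x := by
      intro x
      simp [iteratedDeriv_succ, iteratedDeriv_zero]
    -- pointwise rewriting of D using the PDE
    have hDval : ∀ x ∈ Set.uIcc (0:ℝ) L,
        2 * w s x * D s x
          = (-1) * (2 * f x * deriv f x)
            + ((-2) * (f x * deriv (deriv (deriv f)) x) + (-(2 * lam)) * (f x ^ 2)) := by
      intro x hx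
      rw [Set.uIcc_of_le hL.le] at hx
      have h1 : D s x = deriv (fun u => w u x) s := ((aux_hasDerivAt_t hw s x).deriv).symm
      have h2 := hpde s hs x hx
      rw [hiter x] at h2
      have h3 : deriv (fun u => w u x) s
          = -(deriv f x + deriv (deriv (deriv f)) x + lam * f x) := by
        have : deriv (fun y => w s y) x = deriv f x := rfl
        linarith [h2]
      rw [h1, h3]; ring
    have hIcongr : I s = ∫ x in (0:ℝ)..L,
        ((-1) * (2 * f x * deriv f x)
          + ((-2) * (f x * deriv (deriv (deriv f)) x) + (-(2 * lam)) * (f x ^ 2))) := by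
      exact intervalIntegral.integral_congr hDval
    -- integrability of the pieces
    have hint1 : IntervalIntegrable (fun x => 2 * f x * deriv f x) volume 0 L :=
      ((continuous_const.mul hfc.continuous).mul hf1.continuous).intervalIntegrable 0 L
    have hint2 : IntervalIntegrable (fun x => f x * deriv (deriv (deriv f)) x) volume 0 L :=
      (hfc.continuous.mul hf3.continuous).intervalIntegrable 0 L
    have hintsq : IntervalIntegrable (fun x => f x ^ 2) volume 0 L :=
      (hfc.continuous.pow 2).intervalIntegrable 0 L
    -- boundary values
    have hb0 : f 0 = 0 := hbc0 s hs
    have hbL : f L = 0 := hbcL s hs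
    have hbdL : deriv f L = 0 := hbcxL s hs
    -- first piece: ∫ 2 f f' = 0
    have hA : ∫ x in (0:ℝ)..L, 2 * f x * deriv f x = 0 := by
      rw [aux_int_two_mul_self_deriv f hfc, hb0, hbL]; ring
    -- second: ∫ 2 f' f'' = -(deriv f 0)^2
    have hA' : ∫ x in (0:ℝ)..L, 2 * deriv f x * deriv (deriv f) x = -(deriv f 0) ^ 2 := by
      rw [aux_int_two_mul_self_deriv (deriv f) hf1, hbdL]; ring
    -- third: ∫ f f''' = (deriv f 0)^2 / 2
    have hB : ∫ x in (0:ℝ)..L, f x * deriv (deriv (deriv f)) x = (deriv f 0) ^ 2 / 2 := by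
      have hu : ∀ x ∈ Set.uIcc (0:ℝ) L, HasDerivAt f (deriv f x) x := fun x _ =>
        (hfc.differentiable (by simp) x).hasDerivAt
      have hv : ∀ x ∈ Set.uIcc (0:ℝ) L,
          HasDerivAt (deriv (deriv f)) (deriv (deriv (deriv f)) x) x := fun x _ =>
        (hf2.differentiable (by simp) x).hasDerivAt
      have hparts := intervalIntegral.integral_mul_deriv_eq_deriv_mul hu hv
        ((hf1.continuous).intervalIntegrable 0 L)
        ((hf3.continuous).intervalIntegrable 0 L)
      rw [hb0, hbL] at hparts
      have hfpfpp : ∫ x in (0:ℝ)..L, deriv f x * deriv (deriv f) x = -(deriv f 0) ^ 2 / 2 := by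
        have h2 : ∫ x in (0:ℝ)..L, 2 * (deriv f x * deriv (deriv f) x) = -(deriv f 0) ^ 2 := by
          rw [← hA']; congr 1; funext x; ring
        rw [intervalIntegral.integral_const_mul] at h2
        linarith
      rw [hparts, hfpfpp]; ring
    -- put things together
    have hsplit : I s = (-1) * (∫ x in (0:ℝ)..L, 2 * f x * deriv f x)
        + ((-2) * (∫ x in (0:ℝ)..L, f x * deriv (deriv (deriv f)) x)
          + (-(2 * lam)) * (∫ x in (0:ℝ)..L, f x ^ 2)) := by
      rw [hIcongr,
        intervalIntegral.integral_add (hint1.const_mul (-1))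
          ((hint2.const_mul (-2)).add (hintsq.const_mul (-(2 * lam)))),
        intervalIntegral.integral_add (hint2.const_mul (-2)) (hintsq.const_mul (-(2 * lam))),
        intervalIntegral.integral_const_mul, intervalIntegral.integral_const_mul,
        intervalIntegral.integral_const_mul]
    have hEs : E s = ∫ x in (0:ℝ)..L, f x ^ 2 := rfl
    rw [hsplit, hA, hB, ← hEs]
    nlinarith [sq_nonneg (deriv f 0)]
  -- Gronwall via monotonicity of g = exp(2 λ s) E s
  set g : ℝ → ℝ := fun s => Real.exp (2 * lam * s) * E s with hg
  have hg' : ∀ s, HasDerivAt g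
      (Real.exp (2 * lam * s) * (2 * lam) * E s + Real.exp (2 * lam * s) * I s) s := by
    intro s
    have hexp : HasDerivAt (fun u : ℝ => Real.exp (2 * lam * u))
        (Real.exp (2 * lam * s) * (2 * lam)) s := by
      have h1 : HasDerivAt (fun u : ℝ => 2 * lam * u) (2 * lam) s := by
        simpa using (hasDerivAt_id s).const_mul (2 * lam)
      exact (Real.hasDerivAt_exp _).comp s h1
    exact hexp.mul (hE' s)
  have hanti : AntitoneOn g (Set.Ici (0:ℝ)) := by
    apply antitoneOn_of_deriv_nonpos (convex_Ici 0)
    · exact fun x _ => ((hg' x).continuousAt).continuousWithinAt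
    · intro x hx
      exact ((hg' x).differentiableAt).differentiableWithinAt
    · intro x hx
      rw [interior_Ici] at hx
      rw [(hg' x).deriv]
      have hIx := hkey x (le_of_lt hx)
      have hep : (0:ℝ) < Real.exp (2 * lam * x) := Real.exp_pos _
      nlinarith
  have h1 : g t ≤ g 0 := hanti (Set.self_mem_Ici) (Set.mem_Ici.mpr ht) ht
  have hg0 : g 0 = E 0 := by simp [hg]
  have h2 : Real.exp (2 * lam * t) * E t ≤ E 0 := by rw [← hg0]; exact h1
  have h3 : E t = Real.exp (-2 * lam * t) * (Real.exp (2 * lam * t) * E t) := by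
    rw [← mul_assoc, ← Real.exp_add]
    have : -2 * lam * t + 2 * lam * t = 0 := by ring
    rw [this, Real.exp_zero, one_mul]
  calc E t = Real.exp (-2 * lam * t) * (Real.exp (2 * lam * t) * E t) := h3
    _ ≤ Real.exp (-2 * lam * t) * E 0 :=
        mul_le_mul_of_nonneg_left h2 (Real.exp_pos _).le
end

section
/- The function u : ℝ → ℝ defined by u(x) = 1 − cos(x) satisfies u'(x) + u'''(x) = 0 for all x ∈ ℝ, together with u(0) = 0, u(2π) = 0, u'(0) = 0, u'(2π) = 0, and yet u is not identically zero on [0, 2π]. (Hence, viewed as a stationary solution of the linear KdV equation u_t + u_x + u_xxx = 0 on [0, 2π] with homogeneous boundary conditions u(t,0) = u(t,2π) = u_x(t,2π) = 0, it is a nonzero solution whose output y(t) = u_x(t,0) vanishes identically, so the system with this output is not observable when L = 2π.) -/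
open Real

lemma deriv_const_sub_cos (c : ℝ) : deriv (fun y : ℝ => c - cos y) = sin := by
  funext x
  rw [deriv_const_sub, Real.deriv_cos, neg_neg]

lemma iteratedDeriv_three_const_sub_cos (c x : ℝ) :
    iteratedDeriv 3 (fun y : ℝ => c - cos y) x = -sin x := by
  have h : iteratedDeriv 3 cos = (-1) ^ 2 * sin := Real.iteratedDeriv_odd_cos 1
  rw [iteratedDeriv_const_sub three_pos, iteratedDeriv_neg, h]
  simp

/-- The function `u(x) = 1 - cos x` satisfies `u' + u''' = 0` on `ℝ`, vanishes together with its
derivative at `0` and `2π`, and yet is not identically zero on `[0, 2π]`.  Hence, viewed as a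
stationary solution of the linear KdV equation, it is a nonzero solution with identically
vanishing output `y(t) = u_x(t,0)`, so the system is not observable when `L = 2π`. -/
theorem kdv_not_observable_two_pi :
    (∀ x : ℝ, deriv (fun y => 1 - Real.cos y) x
        + iteratedDeriv 3 (fun y => 1 - Real.cos y) x = 0) ∧
    (1 - Real.cos (0:ℝ) = 0) ∧
    (1 - Real.cos (2 * Real.pi) = 0) ∧
    (deriv (fun y => 1 - Real.cos y) 0 = 0) ∧
    (deriv (fun y => 1 - Real.cos y) (2 * Real.pi) = 0) ∧
    ¬ (∀ x ∈ Set.Icc (0:ℝ) (2 * Real.pi), (1:ℝ) - Real.cos x = 0) := by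
  simp only [deriv_const_sub_cos, iteratedDeriv_three_const_sub_cos]
  refine ⟨fun x => add_neg_cancel (sin x), by rw [cos_zero, sub_self],
    by rw [cos_two_pi, sub_self], sin_zero, sin_two_pi, ?_⟩
  intro h
  have hπ : 1 - cos π = 0 := h π ⟨pi_pos.le, by linarith [pi_pos]⟩
  norm_num [cos_pi] at hπ
end

section
/- Let L > 0 and λ > 0. Let k : ℝ × ℝ → ℝ be a C³ function which on the triangle T = {(x,y) : 0 ≤ x ≤ L, x ≤ y ≤ L} satisfies k_{xxx} + k_{yyy} + k_x + k_y = −λ k, together with k(x,L) = 0, k(x,x) = 0 and k_x(x,x) = (λ/3)(L−x) for all x ∈ [0,L]. Let u : ℝ × ℝ → ℝ be a smooth (C^∞) function satisfying, for all t ≥ 0 and x ∈ [0,L], ∂_t u + ∂_x u + ∂_x^3 u = 0, with boundary conditions u(t,L) = 0, ∂_x u(t,L) = 0, and the feedback boundary condition u(t,0) = ∫₀ᴸ k(0,y) u(t,y) dy for all t ≥ 0. Define w(t,x) = u(t,x) − ∫ₓᴸ k(x,y) u(t,y) dy. Then for all t ≥ 0 and x ∈ [0,L], w satisfies ∂_t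 w + ∂_x w + ∂_x^3 w + λ w = 0, and w(t,0) = 0, w(t,L) = 0, ∂_x w(t,L) = 0. -/
open MeasureTheory

open Set


lemma hasDerivAt_slice_fst {F : ℝ → ℝ → ℝ} (hF : Differentiable ℝ (Function.uncurry F)) (x y : ℝ) :
    HasDerivAt (fun s => F s y) (fderiv ℝ (Function.uncurry F) (x, y) (1, 0)) x := by
  have h1 : HasDerivAt (fun s => ((s, y) : ℝ × ℝ)) (1, 0) x :=
    (hasDerivAt_id x).prodMk (hasDerivAt_const x y)
  exact ((hF (x, y)).hasFDerivAt).comp_hasDerivAt x h1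

lemma hasDerivAt_slice_snd {F : ℝ → ℝ → ℝ} (hF : Differentiable ℝ (Function.uncurry F)) (x y : ℝ) :
    HasDerivAt (fun r => F x r) (fderiv ℝ (Function.uncurry F) (x, y) (0, 1)) y := by
  have h1 : HasDerivAt (fun r => ((x, r) : ℝ × ℝ)) (0, 1) y :=
    (hasDerivAt_const y x).prodMk (hasDerivAt_id y)
  exact ((hF (x, y)).hasFDerivAt).comp_hasDerivAt y h1

lemma contDiff_partial_fst {F : ℝ → ℝ → ℝ} {n : ℕ∞} (hF : ContDiff ℝ (n + 1) (Function.uncurry F)) :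
    ContDiff ℝ n (Function.uncurry fun x y => deriv (fun s => F s y) x) := by
  have hd : Differentiable ℝ (Function.uncurry F) := hF.differentiable (by simp)
  have : (Function.uncurry fun x y => deriv (fun s => F s y) x)
      = fun p : ℝ × ℝ => fderiv ℝ (Function.uncurry F) p (1, 0) := by
    funext p
    exact (hasDerivAt_slice_fst hd p.1 p.2).deriv
  rw [this]
  exact (hF.fderiv_right le_rfl).clm_apply contDiff_const

lemma contDiff_partial_snd {F : ℝ → ℝ → ℝ} {n : ℕ∞} (hF : ContDiff ℝ (n + 1) (Function.uncurry F)) :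
    ContDiff ℝ n (Function.uncurry fun x y => deriv (fun r => F x r) y) := by
  have hd : Differentiable ℝ (Function.uncurry F) := hF.differentiable (by simp)
  have : (Function.uncurry fun x y => deriv (fun r => F x r) y)
      = fun p : ℝ × ℝ => fderiv ℝ (Function.uncurry F) p (0, 1) := by
    funext p
    exact (hasDerivAt_slice_snd hd p.1 p.2).deriv
  rw [this]
  exact (hF.fderiv_right le_rfl).clm_apply contDiff_const

lemma hasDerivAt_diag {F : ℝ → ℝ → ℝ} (hF : Differentiable ℝ (Function.uncurry F)) (x : ℝ) :
    HasDerivAt (fun s => F s s) (deriv (fun s => F s x) x + deriv (fun r => F x r) x) x := by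
  have h1 : HasDerivAt (fun s => ((s, s) : ℝ × ℝ)) (1, 1) x :=
    (hasDerivAt_id x).prodMk (hasDerivAt_id x)
  have h2 : HasDerivAt (Function.uncurry F ∘ fun s => ((s, s) : ℝ × ℝ))
      (fderiv ℝ (Function.uncurry F) (x, x) ((1 : ℝ), (1 : ℝ))) x :=
    HasFDerivAt.comp_hasDerivAt (f := fun s => ((s, s) : ℝ × ℝ)) x ((hF (x, x)).hasFDerivAt) h1
  have e1 : ((1 : ℝ), (1 : ℝ)) = ((1 : ℝ), (0 : ℝ)) + ((0 : ℝ), (1 : ℝ)) := by simp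
  rw [(hasDerivAt_slice_fst hF x x).deriv, (hasDerivAt_slice_snd hF x x).deriv]
  rw [e1, map_add] at h2
  exact h2

lemma deriv_unique_on_Icc {g ψ : ℝ → ℝ} {g' p' a b x : ℝ} (hab : a < b)
    (hx : x ∈ Icc a b) (hg : HasDerivAt g g' x) (hψ : HasDerivAt ψ p' x)
    (heq : ∀ z ∈ Icc a b, g z = ψ z) : g' = p' := by
  have hu : UniqueDiffWithinAt ℝ (Icc a b) x := (uniqueDiffOn_Icc hab) x hx
  have h1 : HasDerivWithinAt ψ g' (Icc a b) x :=
    (hg.hasDerivWithinAt).congr (fun z hz => (heq z hz).symm) ((heq x hx).symm)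
  have h2 : HasDerivWithinAt ψ p' (Icc a b) x := hψ.hasDerivWithinAt
  rw [← h1.derivWithin hu, ← h2.derivWithin hu]

lemma deriv_comm {F : ℝ → ℝ → ℝ} (hF : ContDiff ℝ 2 (Function.uncurry F)) (x y : ℝ) :
    deriv (fun r => deriv (fun s => F s r) x) y
      = deriv (fun s => deriv (fun r => F s r) y) x := by
  set f := Function.uncurry F with hfdef
  have hd : Differentiable ℝ f := hF.differentiable (by norm_num)
  have hd1 : ContDiff ℝ 1 (fderiv ℝ f) := hF.fderiv_right (by norm_num)
  have hdd : Differentiable ℝ (fderiv ℝ f) := hd1.differentiable one_ne_zero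
  have key : ∀ v w : ℝ × ℝ,
      fderiv ℝ (fderiv ℝ f) (x, y) v w = fderiv ℝ (fderiv ℝ f) (x, y) w v :=
    second_derivative_symmetric (fun p => (hd p).hasFDerivAt) ((hdd (x, y)).hasFDerivAt)
  have hcurve2 : HasDerivAt (fun r => ((x, r) : ℝ × ℝ)) (0, 1) y :=
    (hasDerivAt_const y x).prodMk (hasDerivAt_id y)
  have hcurve1 : HasDerivAt (fun s => ((s, y) : ℝ × ℝ)) (1, 0) x :=
    (hasDerivAt_id x).prodMk (hasDerivAt_const x y)
  have hG2 : HasDerivAt (fun r => fderiv ℝ f (x, r))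
      (fderiv ℝ (fderiv ℝ f) (x, y) (0, 1)) y :=
    HasFDerivAt.comp_hasDerivAt (f := fun r => ((x, r) : ℝ × ℝ)) y
      ((hdd (x, y)).hasFDerivAt) hcurve2
  have hG1 : HasDerivAt (fun s => fderiv ℝ f (s, y))
      (fderiv ℝ (fderiv ℝ f) (x, y) (1, 0)) x :=
    HasFDerivAt.comp_hasDerivAt (f := fun s => ((s, y) : ℝ × ℝ)) x
      ((hdd (x, y)).hasFDerivAt) hcurve1
  have hL : (fun r => deriv (fun s => F s r) x) = fun r => fderiv ℝ f (x, r) (1, 0) := by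
    funext r; exact (hasDerivAt_slice_fst hd x r).deriv
  have hR : (fun s => deriv (fun r => F s r) y) = fun s => fderiv ℝ f (s, y) (0, 1) := by
    funext s; exact (hasDerivAt_slice_snd hd s y).deriv
  have l1 : HasDerivAt (fun r => fderiv ℝ f (x, r) ((1 : ℝ), (0 : ℝ)))
      (fderiv ℝ (fderiv ℝ f) (x, y) (0, 1) (1, 0)) y := by
    have := hG2.clm_apply (hasDerivAt_const y ((1 : ℝ), (0 : ℝ)))
    simpa using this
  have l2 : HasDerivAt (fun s => fderiv ℝ f (s, y) ((0 : ℝ), (1 : ℝ)))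
      (fderiv ℝ (fderiv ℝ f) (x, y) (1, 0) (0, 1)) x := by
    have := hG1.clm_apply (hasDerivAt_const x ((0 : ℝ), (1 : ℝ)))
    simpa using this
  rw [hL, hR, l1.deriv, l2.deriv]
  exact key _ _

lemma hasDerivAt_parametric_integral {f : ℝ → ℝ → ℝ}
    (hf : ContDiff ℝ 1 (Function.uncurry f)) (a b x₀ : ℝ) :
    HasDerivAt (fun x => ∫ y in a..b, f x y)
      (∫ y in a..b, deriv (fun s => f s y) x₀) x₀ := by
  have hd : Differentiable ℝ (Function.uncurry f) := hf.differentiable one_ne_zero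
  set g : ℝ × ℝ → ℝ := fun p => fderiv ℝ (Function.uncurry f) p (1, 0) with hgdef
  have hgc : Continuous g := ((hf.fderiv_right (m := 0) (by norm_num)).clm_apply contDiff_const).continuous
  obtain ⟨C, hC⟩ := (isCompact_Icc (a := x₀ - 1) (b := x₀ + 1)).prod
      (isCompact_uIcc (a := a) (b := b)) |>.exists_bound_of_continuousOn hgc.continuousOn
  have key := intervalIntegral.hasDerivAt_integral_of_dominated_loc_of_deriv_le
      (μ := volume) (F := fun x y => f x y) (F' := fun x y => g (x, y)) (x₀ := x₀)
      (a := a) (b := b) (bound := fun _ => C) (Metric.ball_mem_nhds x₀ zero_lt_one)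
      (Filter.Eventually.of_forall fun x =>
        ((hf.continuous.comp (Continuous.prodMk_right x)).aestronglyMeasurable))
      ((hf.continuous.comp (Continuous.prodMk_right x₀)).intervalIntegrable a b)
      ((hgc.comp (Continuous.prodMk_right x₀)).aestronglyMeasurable)
      (Filter.Eventually.of_forall fun y hy x hx => by
        refine hC (x, y) ⟨?_, Set.Ioc_subset_Icc_self hy⟩
        have := Metric.mem_ball.mp hx
        rw [Real.dist_eq] at this
        constructor <;> [linarith [abs_lt.mp this]; linarith [abs_lt.mp this]])
      intervalIntegrable_const
      (Filter.Eventually.of_forall fun y _ x _ => hasDerivAt_slice_fst hd x y)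
  have heq : ∀ y : ℝ, deriv (fun s => f s y) x₀ = g (x₀, y) := fun y =>
    (hasDerivAt_slice_fst hd x₀ y).deriv
  have hrw : (∫ y in a..b, deriv (fun s => f s y) x₀) = ∫ y in a..b, g (x₀, y) :=
    intervalIntegral.integral_congr fun y _ => heq y
  rw [hrw]
  exact key.2

lemma hasDerivAt_integral_moving {f : ℝ → ℝ → ℝ}
    (hf : ContDiff ℝ 1 (Function.uncurry f)) (L x₀ : ℝ) :
    HasDerivAt (fun x => ∫ y in x..L, f x y)
      (-(f x₀ x₀) + ∫ y in x₀..L, deriv (fun s => f s y) x₀) x₀ := by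
  have hd : Differentiable ℝ (Function.uncurry f) := hf.differentiable one_ne_zero
  have hcont : ∀ x : ℝ, Continuous (f x) := fun x => hf.continuous.comp (Continuous.prodMk_right x)
  have hsplit : ∀ x : ℝ, (∫ y in x..L, f x y)
      = (∫ y in x₀..L, f x y) - ∫ y in x₀..x, f x y := by
    intro x
    rw [← intervalIntegral.integral_add_adjacent_intervals
      ((hcont x).intervalIntegrable x₀ x) ((hcont x).intervalIntegrable x L)]
    ring
  have h1 := hasDerivAt_parametric_integral hf x₀ L x₀
  -- derivative of the second piece
  have hψ : HasDerivAt (fun x => ∫ y in x₀..x, f x₀ y) (f x₀ x₀) x₀ :=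
    intervalIntegral.integral_hasDerivAt_right ((hcont x₀).intervalIntegrable x₀ x₀)
      ((hcont x₀).stronglyMeasurableAtFilter volume (nhds x₀)) (hcont x₀).continuousAt
  set g : ℝ × ℝ → ℝ := fun p => fderiv ℝ (Function.uncurry f) p (1, 0) with hgdef
  have hgc : Continuous g :=
    ((hf.fderiv_right (m := 0) (by norm_num)).clm_apply contDiff_const).continuous
  obtain ⟨C, hC⟩ := (isCompact_Icc (a := x₀ - 1) (b := x₀ + 1)).prod
      (isCompact_Icc (a := x₀ - 1) (b := x₀ + 1)) |>.exists_bound_of_continuousOn hgc.continuousOn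
  have hC0 : 0 ≤ C := le_trans (norm_nonneg (g (x₀, x₀)))
    (hC (x₀, x₀) ⟨⟨by linarith, by linarith⟩, ⟨by linarith, by linarith⟩⟩)
  have hlip : ∀ x ∈ Icc (x₀ - 1) (x₀ + 1), ∀ y ∈ Icc (x₀ - 1) (x₀ + 1),
      |f x y - f x₀ y| ≤ C * |x - x₀| := by
    intro x hx y hy
    have hconv : Convex ℝ (Icc (x₀ - 1) (x₀ + 1)) := convex_Icc _ _
    have hder : ∀ z ∈ Icc (x₀ - 1) (x₀ + 1),
        HasDerivWithinAt (fun s => f s y) (g (z, y)) (Icc (x₀ - 1) (x₀ + 1)) z := fun z _ =>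
      (hasDerivAt_slice_fst hd z y).hasDerivWithinAt
    have hbd : ∀ z ∈ Icc (x₀ - 1) (x₀ + 1), ‖g (z, y)‖ ≤ C := fun z hz => hC (z, y) ⟨hz, hy⟩
    have hx0 : x₀ ∈ Icc (x₀ - 1) (x₀ + 1) := by constructor <;> linarith
    have := hconv.norm_image_sub_le_of_norm_hasDerivWithin_le hder hbd hx0 hx
    simpa [Real.norm_eq_abs] using this
  set χ : ℝ → ℝ := fun x => ∫ y in x₀..x, (f x y - f x₀ y) with hχdef
  have hχ0 : χ x₀ = 0 := intervalIntegral.integral_same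
  have hch : HasDerivAt χ 0 x₀ := by
    rw [hasDerivAt_iff_isLittleO, Asymptotics.isLittleO_iff]
    intro c hc
    have hδ : 0 < min 1 (c / (C + 1)) := lt_min one_pos (by positivity)
    filter_upwards [Metric.ball_mem_nhds x₀ hδ] with x hx
    rw [Metric.mem_ball, Real.dist_eq] at hx
    have hx1 : |x - x₀| < 1 := lt_of_lt_of_le hx (min_le_left _ _)
    have hx2 : |x - x₀| < c / (C + 1) := lt_of_lt_of_le hx (min_le_right _ _)
    have hxmem : x ∈ Icc (x₀ - 1) (x₀ + 1) := by
      rcases abs_lt.mp hx1 with ⟨h1, h2⟩; constructor <;> linarith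
    have hbound : ∀ y ∈ Set.uIoc x₀ x, ‖f x y - f x₀ y‖ ≤ C * |x - x₀| := by
      intro y hy
      have hy' : y ∈ Icc (x₀ - 1) (x₀ + 1) := by
        rcases abs_lt.mp hx1 with ⟨h1, h2⟩
        have := Set.uIoc_subset_uIcc (α := ℝ) (a := x₀) (b := x) hy
        rcases this with ⟨hl, hr⟩
        simp only [inf_le_iff, le_sup_iff] at hl hr
        constructor
        · rcases hl with h | h <;> linarith
        · rcases hr with h | h <;> linarith
      simpa [Real.norm_eq_abs] using hlip x hxmem y hy'
    have hest : ‖χ x‖ ≤ C * |x - x₀| * |x - x₀| :=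
      intervalIntegral.norm_integral_le_of_norm_le_const hbound
    have : ‖χ x‖ ≤ c * |x - x₀| := by
      refine le_trans hest ?_
      have h1 : C * |x - x₀| ≤ C * (c / (C + 1)) :=
        mul_le_mul_of_nonneg_left hx2.le hC0
      have h2 : C * (c / (C + 1)) ≤ c := by
        rw [mul_comm, div_mul_eq_mul_div, div_le_iff₀ (by linarith : (0:ℝ) < C + 1)]
        nlinarith
      calc C * |x - x₀| * |x - x₀| ≤ (C * (c / (C + 1))) * |x - x₀| := by
            apply mul_le_mul_of_nonneg_right h1 (abs_nonneg _)
        _ ≤ c * |x - x₀| := mul_le_mul_of_nonneg_right h2 (abs_nonneg _)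
    simpa [hχ0, Real.norm_eq_abs] using this
  have hφeq : ∀ x : ℝ, (∫ y in x₀..x, f x y) = (∫ y in x₀..x, f x₀ y) + χ x := by
    intro x
    show _ = _ + ∫ y in x₀..x, (f x y - f x₀ y)
    rw [intervalIntegral.integral_sub ((hcont x).intervalIntegrable x₀ x)
      ((hcont x₀).intervalIntegrable x₀ x)]
    ring
  have h2 : HasDerivAt (fun x => ∫ y in x₀..x, f x y) (f x₀ x₀) x₀ := by
    have := hψ.add hch
    rw [add_zero] at this
    exact this.congr_deriv rfl |>.congr_of_eventuallyEq
      (Filter.Eventually.of_forall fun x => (hφeq x))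
  have hsum := h1.sub h2
  have hfun : (fun x => ∫ y in x..L, f x y)
      = fun x => (∫ y in x₀..L, f x y) - ∫ y in x₀..x, f x y := funext hsplit
  rw [hfun, neg_add_eq_sub]
  exact hsum.sub_const 0 |>.congr_deriv (by ring) |>.congr_of_eventuallyEq
    (Filter.Eventually.of_forall fun x => by simp)

noncomputable def pd1 (F : ℝ → ℝ → ℝ) : ℝ → ℝ → ℝ := fun x y => deriv (fun s => F s y) x
noncomputable def pd2 (F : ℝ → ℝ → ℝ) : ℝ → ℝ → ℝ := fun x y => deriv (fun r => F x r) y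

lemma iteratedDeriv_three (f : ℝ → ℝ) : iteratedDeriv 3 f = deriv (deriv (deriv f)) := by
  rw [show (3 : ℕ) = 2 + 1 from rfl, iteratedDeriv_succ, show (2 : ℕ) = 1 + 1 from rfl,
    iteratedDeriv_succ, iteratedDeriv_one]

lemma pd1_three (F : ℝ → ℝ → ℝ) (x y : ℝ) :
    iteratedDeriv 3 (fun s => F s y) x = pd1 (pd1 (pd1 F)) x y := by
  rw [iteratedDeriv_three]; rfl

lemma pd2_three (F : ℝ → ℝ → ℝ) (x y : ℝ) :
    iteratedDeriv 3 (fun r => F x r) y = pd2 (pd2 (pd2 F)) x y := by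
  rw [iteratedDeriv_three]; rfl

lemma hasDerivAt_integral_moving_mul {F : ℝ → ℝ → ℝ} (hF : ContDiff ℝ 1 (Function.uncurry F))
    {G : ℝ → ℝ} (hG : ContDiff ℝ (⊤ : ℕ∞) G) (L x₀ : ℝ) :
    HasDerivAt (fun x => ∫ y in x..L, F x y * G y)
      (-(F x₀ x₀ * G x₀) + ∫ y in x₀..L, pd1 F x₀ y * G y) x₀ := by
  have hFG : ContDiff ℝ 1 (Function.uncurry fun x y => F x y * G y) :=
    hF.mul ((hG.of_le (by simp)).comp contDiff_snd)
  have h := hasDerivAt_integral_moving hFG L x₀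
  have hd : Differentiable ℝ (Function.uncurry F) := hF.differentiable one_ne_zero
  have hrw : (∫ y in x₀..L, deriv (fun s => F s y * G y) x₀)
      = ∫ y in x₀..L, pd1 F x₀ y * G y := by
    refine intervalIntegral.integral_congr fun y _ => ?_
    rw [((hasDerivAt_slice_fst hd x₀ y).mul_const (G y)).deriv,
      ← (hasDerivAt_slice_fst hd x₀ y).deriv]
    rfl
  rw [hrw] at h
  exact h

/-- Backstepping transformation for the state feedback design: if `k` solves the kernel PDE
system on the triangle `T = {(x,y) : 0 ≤ x ≤ L, x ≤ y ≤ L}` and `u` solves the linear KdV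
equation with the feedback boundary condition `u(t,0) = ∫₀ᴸ k(0,y) u(t,y) dy`, then
`w(t,x) = u(t,x) - ∫ₓᴸ k(x,y) u(t,y) dy` solves the exponentially stable target system
`w_t + w_x + w_xxx + λ w = 0`, `w(t,0) = w(t,L) = w_x(t,L) = 0`. -/
theorem backstepping_transformation_maps_to_target
    (L lam : ℝ) (hL : 0 < L) (hlam : 0 < lam)
    (k : ℝ → ℝ → ℝ) (hk : ContDiff ℝ 3 (Function.uncurry k))
    (hkpde : ∀ x y : ℝ, (x, y) ∈ {q : ℝ × ℝ | 0 ≤ q.1 ∧ q.1 ≤ L ∧ q.1 ≤ q.2 ∧ q.2 ≤ L} →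
      iteratedDeriv 3 (fun s => k s y) x + iteratedDeriv 3 (fun r => k x r) y
        + deriv (fun s => k s y) x + deriv (fun r => k x r) y = -lam * k x y)
    (hkL : ∀ x ∈ Set.Icc (0:ℝ) L, k x L = 0)
    (hkdiag : ∀ x ∈ Set.Icc (0:ℝ) L, k x x = 0)
    (hkxdiag : ∀ x ∈ Set.Icc (0:ℝ) L, deriv (fun s => k s x) x = lam / 3 * (L - x))
    (u : ℝ → ℝ → ℝ) (hu : ContDiff ℝ (⊤ : ℕ∞) (Function.uncurry u))
    (hupde : ∀ t ≥ (0:ℝ), ∀ x ∈ Set.Icc (0:ℝ) L,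
      deriv (fun s => u s x) t + deriv (fun y => u t y) x
        + iteratedDeriv 3 (fun y => u t y) x = 0)
    (hubcL : ∀ t ≥ (0:ℝ), u t L = 0)
    (hubcxL : ∀ t ≥ (0:ℝ), deriv (fun y => u t y) L = 0)
    (hufeedback : ∀ t ≥ (0:ℝ), u t 0 = ∫ y in (0:ℝ)..L, k 0 y * u t y)
    (w : ℝ → ℝ → ℝ)
    (hwdef : ∀ t x : ℝ, w t x = u t x - ∫ y in x..L, k x y * u t y) :
    ∀ t ≥ (0:ℝ),
      (∀ x ∈ Set.Icc (0:ℝ) L,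
        deriv (fun s => w s x) t + deriv (fun y => w t y) x
          + iteratedDeriv 3 (fun y => w t y) x + lam * w t x = 0) ∧
      w t 0 = 0 ∧ w t L = 0 ∧ deriv (fun y => w t y) L = 0 := by
  intro t ht
  -- basic regularity facts for u
  have hu' : ContDiff ℝ ((⊤ : ℕ∞) : WithTop ℕ∞) (Function.uncurry u) := hu.of_le (by simp)
  have hUc : ContDiff ℝ ((⊤ : ℕ∞) : WithTop ℕ∞) (u t) :=
    hu'.comp (contDiff_const.prodMk contDiff_id)
  have hUd : Differentiable ℝ (u t) := hUc.differentiable (by simp)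
  have hU'c : ContDiff ℝ ((⊤ : ℕ∞) : WithTop ℕ∞) (deriv (u t)) :=
    (contDiff_infty_iff_deriv.mp hUc).2
  have hU'd : Differentiable ℝ (deriv (u t)) := hU'c.differentiable (by simp)
  have hU''c : ContDiff ℝ ((⊤ : ℕ∞) : WithTop ℕ∞) (deriv (deriv (u t))) :=
    (contDiff_infty_iff_deriv.mp hU'c).2
  have hU''d : Differentiable ℝ (deriv (deriv (u t))) := hU''c.differentiable (by simp)
  have hU'''c : ContDiff ℝ ((⊤ : ℕ∞) : WithTop ℕ∞) (deriv (deriv (deriv (u t)))) :=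
    (contDiff_infty_iff_deriv.mp hU''c).2
  have hud : Differentiable ℝ (Function.uncurry u) := hu'.differentiable (by simp)
  -- kernel partial derivatives regularity
  have hkd : Differentiable ℝ (Function.uncurry k) := hk.differentiable (by norm_num)
  have hk1 : ContDiff ℝ ((2 : ℕ∞) : WithTop ℕ∞) (Function.uncurry (pd1 k)) :=
    contDiff_partial_fst (n := 2) (hk.of_le (by norm_num))
  have hk2 : ContDiff ℝ ((2 : ℕ∞) : WithTop ℕ∞) (Function.uncurry (pd2 k)) :=
    contDiff_partial_snd (n := 2) (hk.of_le (by norm_num))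
  have hk11 : ContDiff ℝ ((1 : ℕ∞) : WithTop ℕ∞) (Function.uncurry (pd1 (pd1 k))) :=
    contDiff_partial_fst (n := 1) (hk1.of_le (by norm_num))
  have hk22 : ContDiff ℝ ((1 : ℕ∞) : WithTop ℕ∞) (Function.uncurry (pd2 (pd2 k))) :=
    contDiff_partial_snd (n := 1) (hk2.of_le (by norm_num))
  have hk111 : ContDiff ℝ ((0 : ℕ∞) : WithTop ℕ∞) (Function.uncurry (pd1 (pd1 (pd1 k)))) :=
    contDiff_partial_fst (n := 0) (hk11.of_le (by norm_num))
  have hk222 : ContDiff ℝ ((0 : ℕ∞) : WithTop ℕ∞) (Function.uncurry (pd2 (pd2 (pd2 k)))) :=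
    contDiff_partial_snd (n := 0) (hk22.of_le (by norm_num))
  have hUω : ContDiff ℝ (⊤ : ℕ∞) (u t) := hu.comp (contDiff_const.prodMk contDiff_id)
  -- first spatial derivative of w t, globally
  have hW1 : ∀ x' : ℝ, HasDerivAt (w t)
      (deriv (u t) x' + k x' x' * u t x' - ∫ y in x'..L, pd1 k x' y * u t y) x' := by
    intro x'
    have hmov := hasDerivAt_integral_moving_mul (hk.of_le (by norm_num)) hUω L x'
    have husl : HasDerivAt (u t) (deriv (u t) x') x' := (hUd x').hasDerivAt
    have h := husl.sub hmov
    have hwfun : w t = fun z => u t z - ∫ y in z..L, k z y * u t y := funext fun z => hwdef t z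
    rw [hwfun]
    exact h.congr_deriv (by ring)
  -- diagonal auxiliary functions
  have hAc : ContDiff ℝ 3 (fun z => k z z * u t z) :=
    (hk.comp (contDiff_id.prodMk contDiff_id)).mul (show ContDiff ℝ 3 (u t) from hUω.of_le (WithTop.coe_le_coe.mpr le_top))
  have hAd : Differentiable ℝ (fun z => k z z * u t z) := hAc.differentiable (by norm_num)
  have hA'c : ContDiff ℝ 2 (deriv (fun z => k z z * u t z)) :=
    (contDiff_succ_iff_deriv.mp (hAc.of_le (by norm_num))).2.2
  have hA'd : Differentiable ℝ (deriv (fun z => k z z * u t z)) :=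
    hA'c.differentiable (by norm_num)
  have hBd : Differentiable ℝ (fun z => pd1 k z z * u t z) :=
    (((hk1.differentiable (by norm_num)).comp
      (differentiable_id.prodMk differentiable_id))).mul hUd
  -- second spatial derivative
  have hW2 : ∀ x' : ℝ, HasDerivAt
      (fun z => deriv (u t) z + k z z * u t z - ∫ y in z..L, pd1 k z y * u t y)
      (deriv (deriv (u t)) x' + deriv (fun z' => k z' z' * u t z') x' + pd1 k x' x' * u t x'
        - ∫ y in x'..L, pd1 (pd1 k) x' y * u t y) x' := by
    intro x'
    have h1 : HasDerivAt (deriv (u t)) (deriv (deriv (u t)) x') x' := (hU'd x').hasDerivAt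
    have h2 : HasDerivAt (fun z' => k z' z' * u t z')
        (deriv (fun z' => k z' z' * u t z') x') x' := (hAd x').hasDerivAt
    have hmov := hasDerivAt_integral_moving_mul (hk1.of_le (by norm_num)) hUω L x'
    have h := (h1.add h2).sub hmov
    exact h.congr_deriv (by ring)
  -- third spatial derivative
  have hW3 : ∀ x' : ℝ, HasDerivAt
      (fun z => deriv (deriv (u t)) z + deriv (fun z' => k z' z' * u t z') z
        + pd1 k z z * u t z - ∫ y in z..L, pd1 (pd1 k) z y * u t y)
      (deriv (deriv (deriv (u t))) x' + deriv (deriv (fun z' => k z' z' * u t z')) x'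
        + deriv (fun z => pd1 k z z * u t z) x' + pd1 (pd1 k) x' x' * u t x'
        - ∫ y in x'..L, pd1 (pd1 (pd1 k)) x' y * u t y) x' := by
    intro x'
    have h1 : HasDerivAt (deriv (deriv (u t))) (deriv (deriv (deriv (u t))) x') x' :=
      (hU''d x').hasDerivAt
    have h2 : HasDerivAt (deriv (fun z' => k z' z' * u t z'))
        (deriv (deriv (fun z' => k z' z' * u t z')) x') x' := (hA'd x').hasDerivAt
    have h3 : HasDerivAt (fun z => pd1 k z z * u t z)
        (deriv (fun z => pd1 k z z * u t z) x') x' := (hBd x').hasDerivAt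
    have hmov := hasDerivAt_integral_moving_mul (hk11.of_le (by norm_num)) hUω L x'
    have h := ((h1.add h2).add h3).sub hmov
    exact h.congr_deriv (by ring)
  have hd1 : deriv (w t)
      = fun z => deriv (u t) z + k z z * u t z - ∫ y in z..L, pd1 k z y * u t y :=
    funext fun z => (hW1 z).deriv
  have hd2 : deriv (fun z => deriv (u t) z + k z z * u t z - ∫ y in z..L, pd1 k z y * u t y)
      = fun z => deriv (deriv (u t)) z + deriv (fun z' => k z' z' * u t z') z
        + pd1 k z z * u t z - ∫ y in z..L, pd1 (pd1 k) z y * u t y :=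
    funext fun z => (hW2 z).deriv
  refine ⟨?_, ?_, ?_, ?_⟩
  · -- the target PDE
    intro x hx
    obtain ⟨hx0, hxL⟩ := hx
    -- time derivative of w
    have hTc : ContDiff ℝ ((1 : ℕ∞) : WithTop ℕ∞) (Function.uncurry fun s y => k x y * u s y) :=
      ((hk.of_le (by norm_num)).comp (contDiff_const.prodMk contDiff_snd)).mul
        (hu.of_le (by simp))
    have hpar := hasDerivAt_parametric_integral hTc x L t
    have hparc : HasDerivAt (fun s => ∫ y in x..L, k x y * u s y)
        (∫ y in x..L, k x y * deriv (fun s => u s y) t) t := by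
      have hrw : (∫ y in x..L, deriv (fun s => k x y * u s y) t)
          = ∫ y in x..L, k x y * deriv (fun s => u s y) t := by
        refine intervalIntegral.integral_congr fun y _ => ?_
        have hsl := hasDerivAt_slice_fst hud t y
        rw [(HasDerivAt.const_mul (k x y) hsl).deriv, ← hsl.deriv]
      rwa [hrw] at hpar
    have husl : HasDerivAt (fun s => u s x) (deriv (fun s => u s x) t) t :=
      (hasDerivAt_slice_fst hud t x).differentiableAt.hasDerivAt
    have hT : deriv (fun s => w s x) t
        = deriv (fun s => u s x) t - ∫ y in x..L, k x y * deriv (fun s => u s y) t := by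
      have h := husl.sub hparc
      have hwfun : (fun s => w s x) = fun s => u s x - ∫ y in x..L, k x y * u s y :=
        funext fun s => hwdef s x
      rw [hwfun]
      exact h.deriv
    -- slices of the kernel in the second variable
    have hkslice : ∀ y : ℝ, HasDerivAt (k x) (pd2 k x y) y := fun y =>
      (hasDerivAt_slice_snd hkd x y).differentiableAt.hasDerivAt
    have hk2slice : ∀ y : ℝ, HasDerivAt (pd2 k x) (pd2 (pd2 k) x y) y := fun y =>
      (hasDerivAt_slice_snd (hk2.differentiable (by norm_num)) x y).differentiableAt.hasDerivAt
    have hk22slice : ∀ y : ℝ, HasDerivAt (pd2 (pd2 k) x) (pd2 (pd2 (pd2 k)) x y) y := fun y =>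
      (hasDerivAt_slice_snd (hk22.differentiable (by norm_num)) x y).differentiableAt.hasDerivAt
    have hkxcont : Continuous (k x) := hk.continuous.comp (Continuous.prodMk_right x)
    have hk2cont : Continuous (pd2 k x) := hk2.continuous.comp (Continuous.prodMk_right x)
    have hk22cont : Continuous (pd2 (pd2 k) x) := hk22.continuous.comp (Continuous.prodMk_right x)
    have hk222cont : Continuous (pd2 (pd2 (pd2 k)) x) :=
      hk222.continuous.comp (Continuous.prodMk_right x)
    have hk1cont : Continuous (fun y => pd1 k x y) := hk1.continuous.comp (Continuous.prodMk_right x)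
    have hk111cont : Continuous (fun y => pd1 (pd1 (pd1 k)) x y) :=
      hk111.continuous.comp (Continuous.prodMk_right x)
    -- integration by parts
    have hIBP1 : ∫ y in x..L, k x y * deriv (u t) y
        = k x L * u t L - k x x * u t x - ∫ y in x..L, pd2 k x y * u t y :=
      intervalIntegral.integral_mul_deriv_eq_deriv_mul
        (fun y _ => hkslice y) (fun y _ => (hUd y).hasDerivAt)
        (hk2cont.intervalIntegrable x L) (hU'c.continuous.intervalIntegrable x L)
    have hIBP2 : ∫ y in x..L, k x y * deriv (deriv (deriv (u t))) y
        = k x L * deriv (deriv (u t)) L - k x x * deriv (deriv (u t)) x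
          - ∫ y in x..L, pd2 k x y * deriv (deriv (u t)) y :=
      intervalIntegral.integral_mul_deriv_eq_deriv_mul
        (fun y _ => hkslice y) (fun y _ => (hU''d y).hasDerivAt)
        (hk2cont.intervalIntegrable x L) (hU'''c.continuous.intervalIntegrable x L)
    have hIBP3 : ∫ y in x..L, pd2 k x y * deriv (deriv (u t)) y
        = pd2 k x L * deriv (u t) L - pd2 k x x * deriv (u t) x
          - ∫ y in x..L, pd2 (pd2 k) x y * deriv (u t) y :=
      intervalIntegral.integral_mul_deriv_eq_deriv_mul
        (fun y _ => hk2slice y) (fun y _ => (hU'd y).hasDerivAt)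
        (hk22cont.intervalIntegrable x L) (hU''c.continuous.intervalIntegrable x L)
    have hIBP4 : ∫ y in x..L, pd2 (pd2 k) x y * deriv (u t) y
        = pd2 (pd2 k) x L * u t L - pd2 (pd2 k) x x * u t x
          - ∫ y in x..L, pd2 (pd2 (pd2 k)) x y * u t y :=
      intervalIntegral.integral_mul_deriv_eq_deriv_mul
        (fun y _ => hk22slice y) (fun y _ => (hUd y).hasDerivAt)
        (hk222cont.intervalIntegrable x L) (hU'c.continuous.intervalIntegrable x L)
    -- substitute the u-equation into the time integral
    have hTint : (∫ y in x..L, k x y * deriv (fun s => u s y) t)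
        = -(∫ y in x..L, k x y * deriv (u t) y)
          - ∫ y in x..L, k x y * deriv (deriv (deriv (u t))) y := by
      have hcg : (∫ y in x..L, k x y * deriv (fun s => u s y) t)
          = ∫ y in x..L, (-(k x y * deriv (u t) y) - k x y * deriv (deriv (deriv (u t))) y) := by
        refine intervalIntegral.integral_congr fun y hy => ?_
        rw [Set.uIcc_of_le hxL] at hy
        have hy' : y ∈ Set.Icc (0:ℝ) L := ⟨le_trans hx0 hy.1, hy.2⟩
        have hp := hupde t ht y hy'
        rw [iteratedDeriv_three] at hp
        have hp' : deriv (fun s => u s y) t + deriv (u t) y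
            + deriv (deriv (deriv (u t))) y = 0 := hp
        linear_combination k x y * hp'
      rw [hcg, intervalIntegral.integral_sub
        (show IntervalIntegrable (fun y => -(k x y * deriv (u t) y)) volume x L from
          (hkxcont.mul hU'c.continuous).neg.intervalIntegrable x L)
        (show IntervalIntegrable (fun y => k x y * deriv (deriv (deriv (u t))) y) volume x L from
          (hkxcont.mul hU'''c.continuous).intervalIntegrable x L),
        intervalIntegral.integral_neg]
    -- the kernel PDE integrated against u
    have hKint : (∫ y in x..L, pd1 k x y * u t y) + (∫ y in x..L, pd1 (pd1 (pd1 k)) x y * u t y)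
        + (∫ y in x..L, pd2 k x y * u t y) + (∫ y in x..L, pd2 (pd2 (pd2 k)) x y * u t y)
        = -(lam * ∫ y in x..L, k x y * u t y) := by
      have hi1 : IntervalIntegrable (fun y => pd1 k x y * u t y) volume x L := (hk1cont.mul hUc.continuous).intervalIntegrable (μ := MeasureTheory.volume) x L
      have hi2 : IntervalIntegrable (fun y => pd1 (pd1 (pd1 k)) x y * u t y) volume x L := (hk111cont.mul hUc.continuous).intervalIntegrable (μ := MeasureTheory.volume) x L
      have hi3 : IntervalIntegrable (fun y => pd2 k x y * u t y) volume x L := (hk2cont.mul hUc.continuous).intervalIntegrable (μ := MeasureTheory.volume) x L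
      have hi4 : IntervalIntegrable (fun y => pd2 (pd2 (pd2 k)) x y * u t y) volume x L := (hk222cont.mul hUc.continuous).intervalIntegrable (μ := MeasureTheory.volume) x L
      rw [← intervalIntegral.integral_add hi1 hi2,
        ← intervalIntegral.integral_add (hi1.add hi2) hi3,
        ← intervalIntegral.integral_add ((hi1.add hi2).add hi3) hi4]
      have hcg : (∫ y in x..L, (pd1 k x y * u t y + pd1 (pd1 (pd1 k)) x y * u t y
            + pd2 k x y * u t y + pd2 (pd2 (pd2 k)) x y * u t y))
          = ∫ y in x..L, -(lam * (k x y * u t y)) := by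
        refine intervalIntegral.integral_congr fun y hy => ?_
        rw [Set.uIcc_of_le hxL] at hy
        have hpk := hkpde x y ⟨hx0, hxL, hy.1, hy.2⟩
        rw [pd1_three, pd2_three] at hpk
        have hpk' : pd1 (pd1 (pd1 k)) x y + pd2 (pd2 (pd2 k)) x y + pd1 k x y + pd2 k x y
            = -lam * k x y := hpk
        linear_combination u t y * hpk'
      rw [hcg, intervalIntegral.integral_neg, intervalIntegral.integral_const_mul]
    -- diagonal identities
    have hkxx : k x x = 0 := hkdiag x ⟨hx0, hxL⟩
    have hdiagsum : ∀ z ∈ Set.Icc (0:ℝ) L, pd1 k z z + pd2 k z z = 0 := fun z hz =>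
      deriv_unique_on_Icc hL hz (hasDerivAt_diag hkd z) (hasDerivAt_const z 0)
        (fun z' hz' => hkdiag z' hz')
    have hk2diag : ∀ z ∈ Set.Icc (0:ℝ) L, pd2 k z z = -(lam / 3 * (L - z)) := by
      intro z hz
      have h1 := hdiagsum z hz
      have h2 : pd1 k z z = lam / 3 * (L - z) := hkxdiag z hz
      linarith
    have hψ1 : ∀ z : ℝ, HasDerivAt (fun z' => lam / 3 * (L - z')) (-(lam / 3)) z := fun z =>
      (HasDerivAt.const_mul (lam / 3) ((hasDerivAt_id z).const_sub L)).congr_deriv (by ring)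
    have hψ2 : ∀ z : ℝ, HasDerivAt (fun z' => -(lam / 3 * (L - z'))) (lam / 3) z := fun z =>
      ((hψ1 z).neg).congr_deriv (by ring)
    have hA'zero : ∀ z ∈ Set.Icc (0:ℝ) L, deriv (fun z' => k z' z' * u t z') z = 0 := fun z hz =>
      deriv_unique_on_Icc hL hz (hAd z).hasDerivAt (hasDerivAt_const z 0)
        (fun z' hz' => by rw [hkdiag z' hz', zero_mul])
    have hA''zero : deriv (deriv (fun z' => k z' z' * u t z')) x = 0 :=
      deriv_unique_on_Icc hL ⟨hx0, hxL⟩ (hA'd x).hasDerivAt (hasDerivAt_const x 0) hA'zero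
    have hBx : deriv (fun z => pd1 k z z * u t z) x
        = -(lam / 3) * u t x + lam / 3 * (L - x) * deriv (u t) x := by
      have hψ : HasDerivAt (fun z => lam / 3 * (L - z) * u t z)
          (-(lam / 3) * u t x + lam / 3 * (L - x) * deriv (u t) x) x :=
        ((hψ1 x).mul (hUd x).hasDerivAt).congr_deriv (by ring)
      exact deriv_unique_on_Icc hL ⟨hx0, hxL⟩ (hBd x).hasDerivAt hψ
        (fun z hz => by rw [show pd1 k z z = lam / 3 * (L - z) from hkxdiag z hz])
    have hb' : pd1 (pd1 k) x x + pd2 (pd1 k) x x = -(lam / 3) :=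
      deriv_unique_on_Icc hL ⟨hx0, hxL⟩
        (hasDerivAt_diag (hk1.differentiable (by norm_num)) x) (hψ1 x)
        (fun z hz => hkxdiag z hz)
    have hc' : pd1 (pd2 k) x x + pd2 (pd2 k) x x = lam / 3 :=
      deriv_unique_on_Icc hL ⟨hx0, hxL⟩
        (hasDerivAt_diag (hk2.differentiable (by norm_num)) x) (hψ2 x)
        (fun z hz => hk2diag z hz)
    have hclair : pd2 (pd1 k) x x = pd1 (pd2 k) x x := deriv_comm (hk.of_le (by norm_num)) x x
    have hsecond : pd2 (pd2 k) x x - pd1 (pd1 k) x x = 2 * lam / 3 := by linarith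
    -- boundary values of u
    have hUL : u t L = 0 := hubcL t ht
    have hU'L : deriv (u t) L = 0 := hubcxL t ht
    -- expressions for the three derivatives appearing in the goal
    have hgoal2 : deriv (fun y => w t y) x
        = deriv (u t) x + k x x * u t x - ∫ y in x..L, pd1 k x y * u t y := (hW1 x).deriv
    have hgoal3 : iteratedDeriv 3 (fun y => w t y) x
        = deriv (deriv (deriv (u t))) x + deriv (deriv (fun z' => k z' z' * u t z')) x
          + deriv (fun z => pd1 k z z * u t z) x + pd1 (pd1 k) x x * u t x
          - ∫ y in x..L, pd1 (pd1 (pd1 k)) x y * u t y := by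
      have e0 : iteratedDeriv 3 (fun y => w t y) x = deriv (deriv (deriv (w t))) x := by
        rw [iteratedDeriv_three]
      rw [e0, hd1, hd2]
      exact (hW3 x).deriv
    have hpU := hupde t ht x ⟨hx0, hxL⟩
    rw [iteratedDeriv_three] at hpU
    have hpU' : deriv (fun s => u s x) t + deriv (u t) x
        + deriv (deriv (deriv (u t))) x = 0 := hpU
    rw [hT, hgoal2, hgoal3, hwdef t x, hTint, hIBP1, hIBP2, hIBP3, hIBP4, hkxx, hUL, hU'L,
      hkL x ⟨hx0, hxL⟩, hA''zero, hBx,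
      show pd2 k x x = -(lam / 3 * (L - x)) from hk2diag x ⟨hx0, hxL⟩]
    linear_combination hpU' - hKint - u t x * hsecond
  · rw [hwdef t 0, hufeedback t ht, sub_self]
  · rw [hwdef t L, intervalIntegral.integral_same, hubcL t ht, sub_zero]
  · show deriv (w t) L = 0
    rw [hd1]
    have h1 : deriv (u t) L = 0 := hubcxL t ht
    have h2 : u t L = 0 := hubcL t ht
    simp [intervalIntegral.integral_same, h1, h2]
end

section
/- Let L > 0 and λ > 0, and suppose k : ℝ × ℝ → ℝ is a C³ function which on the triangle T = {(x,y) : 0 ≤ x ≤ L, x ≤ y ≤ L} satisfies the k-kernel system with parameter λ. Then there exists a constant C > 0 such that for every smooth (C^∞) function u : ℝ × ℝ → ℝ satisfying, for all t ≥ 0 and x ∈ [0,L], ∂_t u + ∂_x u + ∂_x^3 u = 0, with u(t,L) = 0, ∂_x u(t,L) = 0, and u(t,0) = ∫₀ᴸ k(0,y) u(t,y) dy for all t ≥ 0, one has ∫₀ᴸ u(t,x)² dx ≤ C e^{−2λt} ∫₀ᴸ u(0,x)² dx for all t ≥ 0. -/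
open MeasureTheory Set intervalIntegral

/-- Parametric differentiation under the interval integral, fixed endpoints. -/
lemma helperA {F F' : ℝ → ℝ → ℝ} (hF : Continuous (Function.uncurry F))
    (hF' : Continuous (Function.uncurry F'))
    (hd : ∀ s y, HasDerivAt (fun a => F a y) (F' s y) s) (a b x₀ : ℝ) :
    HasDerivAt (fun s => ∫ y in a..b, F s y) (∫ y in a..b, F' x₀ y) x₀ := by
  obtain ⟨M, hM⟩ := (isCompact_Icc.prod isCompact_uIcc :
      IsCompact (Icc (x₀ - 1) (x₀ + 1) ×ˢ uIcc a b)).exists_bound_of_continuousOn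
      hF'.continuousOn
  refine (intervalIntegral.hasDerivAt_integral_of_dominated_loc_of_deriv_le
      (F := F) (F' := F') (bound := fun _ => M) (Metric.ball_mem_nhds x₀ one_pos)
      (Filter.Eventually.of_forall fun x =>
        ((hF.comp (Continuous.prodMk_right x)).aestronglyMeasurable))
      ((hF.comp (Continuous.prodMk_right x₀)).intervalIntegrable a b)
      ((hF'.comp (Continuous.prodMk_right x₀)).aestronglyMeasurable)
      (Filter.Eventually.of_forall fun y hy x hx => ?_)
      (intervalIntegrable_const)
      (Filter.Eventually.of_forall fun y _ x _ => hd x y)).2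
  have hx' : x ∈ Icc (x₀ - 1) (x₀ + 1) := by
    have := Metric.mem_ball.mp hx
    rw [Real.dist_eq, abs_sub_lt_iff] at this
    constructor <;> linarith [this.1, this.2]
  exact hM (x, y) ⟨hx', uIoc_subset_uIcc hy⟩

/-- Derivative of `s ↦ ∫_{x₀}^{s} F s y dy` at `x₀`. -/
lemma helperB {F : ℝ → ℝ → ℝ} (hF : Continuous (Function.uncurry F)) (x₀ : ℝ) :
    HasDerivAt (fun s => ∫ y in x₀..s, F s y) (F x₀ x₀) x₀ := by
  rw [hasDerivAt_iff_isLittleO]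
  rw [Asymptotics.isLittleO_iff]
  intro c hc
  have hcont : ContinuousAt (Function.uncurry F) (x₀, x₀) := hF.continuousAt
  obtain ⟨δ, hδ, hball⟩ := Metric.continuousAt_iff.mp hcont c hc
  filter_upwards [Metric.ball_mem_nhds x₀ (half_pos hδ)] with s hs
  have hs' : |s - x₀| < δ / 2 := by
    have := Metric.mem_ball.mp hs; rwa [Real.dist_eq] at this
  have key : ∀ y ∈ Set.uIoc x₀ s, ‖F s y - F x₀ x₀‖ ≤ c := by
    intro y hy
    have hy' : |y - x₀| ≤ |s - x₀| := by
      rcases le_total x₀ s with h | h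
      · rw [uIoc_of_le h] at hy
        rw [abs_of_nonneg (by linarith [hy.1]), abs_of_nonneg (by linarith [hy.1])]
        linarith [hy.2]
      · rw [uIoc_of_ge h] at hy
        rw [abs_of_nonpos (by linarith [hy.2]), abs_of_nonpos (by linarith [hy.2])]
        linarith [hy.1]
    have hdist : dist ((s, y) : ℝ × ℝ) (x₀, x₀) < δ := by
      rw [Prod.dist_eq]
      have h1 : dist s x₀ < δ := by rw [Real.dist_eq]; linarith
      have h2 : dist y x₀ < δ := by rw [Real.dist_eq]; linarith [lt_of_le_of_lt hy' hs']
      exact max_lt h1 h2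
    exact le_of_lt (hball hdist)
  have h0 : (∫ y in x₀..x₀, F x₀ y) = 0 := intervalIntegral.integral_same
  rw [h0]
  have hi1 : IntervalIntegrable (fun y => F s y) volume x₀ s :=
    (hF.comp (Continuous.prodMk_right s)).intervalIntegrable _ _
  have heq : (∫ y in x₀..s, F s y) - 0 - (s - x₀) • F x₀ x₀
      = ∫ y in x₀..s, (F s y - F x₀ x₀) := by
    rw [intervalIntegral.integral_sub hi1 (intervalIntegrable_const)]
    simp [smul_eq_mul, mul_comm]
  rw [heq]
  calc ‖∫ y in x₀..s, (F s y - F x₀ x₀)‖ ≤ c * |s - x₀| :=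
        intervalIntegral.norm_integral_le_of_norm_le_const key
    _ = c * ‖s - x₀‖ := by rw [Real.norm_eq_abs]

/-- Derivative of `s ↦ ∫_{s}^{L} F s y dy`. -/
lemma helperC {F F' : ℝ → ℝ → ℝ} (hF : Continuous (Function.uncurry F))
    (hF' : Continuous (Function.uncurry F'))
    (hd : ∀ s y, HasDerivAt (fun a => F a y) (F' s y) s) (L x₀ : ℝ) :
    HasDerivAt (fun s => ∫ y in s..L, F s y)
      ((∫ y in x₀..L, F' x₀ y) - F x₀ x₀) x₀ := by
  have heq : ∀ s, (∫ y in s..L, F s y)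
      = (∫ y in x₀..L, F s y) - (∫ y in x₀..s, F s y) := by
    intro s
    have h1 : IntervalIntegrable (fun y => F s y) volume x₀ s :=
      (hF.comp (Continuous.prodMk_right s)).intervalIntegrable _ _
    have h2 : IntervalIntegrable (fun y => F s y) volume s L :=
      (hF.comp (Continuous.prodMk_right s)).intervalIntegrable _ _
    rw [← intervalIntegral.integral_add_adjacent_intervals h1 h2]
    ring
  have := (helperA hF hF' hd x₀ L x₀).sub (helperB hF x₀)
  exact this.congr_of_eventuallyEq (Filter.Eventually.of_forall fun s => (heq s))

/-- Joint continuity of the moving-endpoint parametric integral. -/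
lemma helperD {X : Type*} [TopologicalSpace X] {F : X → ℝ → ℝ}
    (hF : Continuous (Function.uncurry F)) {s : X → ℝ} (hs : Continuous s) (L : ℝ) :
    Continuous (fun q : X => ∫ y in s q..L, F q y) := by
  have h : Continuous (fun q : X => ∫ y in L..s q, F q y) :=
    intervalIntegral.continuous_parametric_intervalIntegral_of_continuous hF hs
  have heq : (fun q : X => ∫ y in s q..L, F q y)
      = fun q : X => -(∫ y in L..s q, F q y) :=
    funext fun q => intervalIntegral.integral_symm _ _
  rw [heq]
  exact h.neg

/-- Two functions agreeing on `Icc a b` have the same derivative there. -/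
lemma deriv_eq_on_Icc {f g : ℝ → ℝ} {f' g' a b x : ℝ} (hab : a < b) (hx : x ∈ Icc a b)
    (hf : HasDerivAt f f' x) (hg : HasDerivAt g g' x)
    (hfg : ∀ y ∈ Icc a b, f y = g y) : f' = g' := by
  have h1 : HasDerivWithinAt f f' (Icc a b) x := hf.hasDerivWithinAt
  have h2 : HasDerivWithinAt g g' (Icc a b) x := hg.hasDerivWithinAt
  have h3 : HasDerivWithinAt f g' (Icc a b) x := h2.congr hfg (hfg x hx)
  exact (uniqueDiffOn_Icc hab x hx).eq_deriv _ h1 h3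

/-- Cauchy-Schwarz: `(∫₀ᴸ |f|)² ≤ L ∫₀ᴸ f²` for continuous `f`. -/
lemma cs_lemma {f : ℝ → ℝ} (hf : Continuous f) {L : ℝ} (hL : 0 < L) :
    (∫ y in (0:ℝ)..L, |f y|) ^ 2 ≤ L * ∫ y in (0:ℝ)..L, (f y) ^ 2 := by
  set G : ℝ → ℝ := fun x => x * (∫ y in (0:ℝ)..x, (f y) ^ 2) - (∫ y in (0:ℝ)..x, |f y|) ^ 2
    with hG
  have hint1 : ∀ x : ℝ, HasDerivAt (fun s => ∫ y in (0:ℝ)..s, (f y) ^ 2) ((f x) ^ 2) x := by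
    intro x
    exact intervalIntegral.integral_hasDerivAt_right
      ((hf.pow 2).intervalIntegrable _ _) ((hf.pow 2).stronglyMeasurableAtFilter _ _)
      (hf.pow 2).continuousAt
  have hint2 : ∀ x : ℝ, HasDerivAt (fun s => ∫ y in (0:ℝ)..s, |f y|) (|f x|) x := by
    intro x
    exact intervalIntegral.integral_hasDerivAt_right
      (hf.abs.intervalIntegrable _ _) (hf.abs.stronglyMeasurableAtFilter _ _)
      hf.abs.continuousAt
  have hGd : ∀ x : ℝ, HasDerivAt G
      ((∫ y in (0:ℝ)..x, (f y) ^ 2) + x * (f x) ^ 2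
        - 2 * (∫ y in (0:ℝ)..x, |f y|) * |f x|) x := by
    intro x
    have h1 := (hasDerivAt_id x).mul (hint1 x)
    have h2 := (hint2 x).pow 2
    have h3 := h1.sub h2
    refine h3.congr_deriv ?_
    simp only [id_eq, pow_one, Nat.cast_ofNat]
    ring
  have hGc : Continuous G :=
    continuous_iff_continuousAt.mpr fun x => (hGd x).continuousAt
  have hmono : MonotoneOn G (Icc 0 L) := by
    apply monotoneOn_of_deriv_nonneg (convex_Icc 0 L) hGc.continuousOn
      (fun x _ => (hGd x).differentiableAt.differentiableWithinAt)
    intro x hx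
    rw [(hGd x).deriv]
    have hx' : x ∈ Ioo (0:ℝ) L := by rwa [interior_Icc] at hx
    have hx0 : (0:ℝ) ≤ x := hx'.1.le
    have key : (∫ y in (0:ℝ)..x, ((|f y| - |f x|) ^ 2)) =
        (∫ y in (0:ℝ)..x, (f y) ^ 2) + x * (f x) ^ 2
          - 2 * (∫ y in (0:ℝ)..x, |f y|) * |f x| := by
      have e1 : ∀ y : ℝ, (|f y| - |f x|) ^ 2
          = (f y) ^ 2 - (2 * |f x|) * |f y| + (f x) ^ 2 := by
        intro y
        have := sq_abs (f y); have := sq_abs (f x)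
        nlinarith [sq_abs (f y), sq_abs (f x)]
      simp_rw [e1]
      rw [intervalIntegral.integral_add (f := fun y => f y ^ 2 - 2 * |f x| * |f y|)
            (g := fun _ => f x ^ 2) (((hf.pow 2).intervalIntegrable _ _).sub
            ((continuous_const.mul hf.abs).intervalIntegrable _ _)) intervalIntegrable_const,
          intervalIntegral.integral_sub (f := fun y => f y ^ 2)
              (g := fun y => 2 * |f x| * |f y|) ((hf.pow 2).intervalIntegrable _ _)
            ((continuous_const.mul hf.abs).intervalIntegrable _ _),
          intervalIntegral.integral_const_mul, intervalIntegral.integral_const]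
      simp [smul_eq_mul]
      ring
    rw [← key]
    apply intervalIntegral.integral_nonneg hx0
    intro y _
    positivity
  have h0 : G 0 = 0 := by simp [hG]
  have hfin := hmono (Set.left_mem_Icc.mpr hL.le) (Set.right_mem_Icc.mpr hL.le) hL.le
  rw [h0] at hfin
  simp only [hG] at hfin
  linarith

open MeasureTheory Set intervalIntegral

section Machinery

variable {K : ℝ × ℝ → ℝ}

/-- First fderiv along a path. -/
lemma mline1 (hK : ContDiff ℝ 3 K) {g : ℝ → ℝ × ℝ} {g' : ℝ × ℝ} {x : ℝ}
    (hg : HasDerivAt g g' x) :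
    HasDerivAt (fun s => K (g s)) (fderiv ℝ K (g x) g') x :=
  (hK.differentiable (by norm_num) (g x)).hasFDerivAt.comp_hasDerivAt x hg

lemma mline2 (hK : ContDiff ℝ 3 K) {g : ℝ → ℝ × ℝ} {g' : ℝ × ℝ} {x : ℝ}
    (hg : HasDerivAt g g' x) (v : ℝ × ℝ) :
    HasDerivAt (fun s => fderiv ℝ K (g s) v)
      (fderiv ℝ (fderiv ℝ K) (g x) g' v) x := by
  have h1 : ContDiff ℝ 2 (fderiv ℝ K) := hK.fderiv_right (by norm_num)
  have h2 : HasDerivAt (fun s => fderiv ℝ K (g s)) (fderiv ℝ (fderiv ℝ K) (g x) g') x :=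
    (h1.differentiable (by norm_num) (g x)).hasFDerivAt.comp_hasDerivAt x hg
  have := h2.clm_apply (hasDerivAt_const x v)
  simpa using this

lemma mline3 (hK : ContDiff ℝ 3 K) {g : ℝ → ℝ × ℝ} {g' : ℝ × ℝ} {x : ℝ}
    (hg : HasDerivAt g g' x) (v w : ℝ × ℝ) :
    HasDerivAt (fun s => fderiv ℝ (fderiv ℝ K) (g s) v w)
      (fderiv ℝ (fderiv ℝ (fderiv ℝ K)) (g x) g' v w) x := by
  have h1 : ContDiff ℝ 1 (fderiv ℝ (fderiv ℝ K)) :=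
    (hK.fderiv_right (m := 2) (by norm_num)).fderiv_right (by norm_num)
  have h2 : HasDerivAt (fun s => fderiv ℝ (fderiv ℝ K) (g s))
      (fderiv ℝ (fderiv ℝ (fderiv ℝ K)) (g x) g') x :=
    (h1.differentiable (by norm_num) (g x)).hasFDerivAt.comp_hasDerivAt x hg
  have h3 := h2.clm_apply (hasDerivAt_const x v)
  have h4 : HasDerivAt (fun s => fderiv ℝ (fderiv ℝ K) (g s) v)
      (fderiv ℝ (fderiv ℝ (fderiv ℝ K)) (g x) g' v) x := by simpa using h3
  have h5 := h4.clm_apply (hasDerivAt_const x w)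
  simpa using h5

/-- Paths. -/
lemma pathx (y x : ℝ) : HasDerivAt (fun s : ℝ => (s, y)) ((1:ℝ), (0:ℝ)) x :=
  (hasDerivAt_id x).prodMk (hasDerivAt_const x y)

lemma pathy (x y : ℝ) : HasDerivAt (fun r : ℝ => (x, r)) ((0:ℝ), (1:ℝ)) y :=
  (hasDerivAt_const y x).prodMk (hasDerivAt_id y)

lemma pathd (x : ℝ) : HasDerivAt (fun s : ℝ => (s, s)) ((1:ℝ), (1:ℝ)) x :=
  (hasDerivAt_id x).prodMk (hasDerivAt_id x)

/-- Continuity of applied derivatives. -/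
lemma mcont1 (hK : ContDiff ℝ 3 K) (v : ℝ × ℝ) :
    Continuous fun p : ℝ × ℝ => fderiv ℝ K p v :=
  (hK.fderiv_right (m := 2) (by norm_num)).continuous.clm_apply continuous_const

lemma mcont2 (hK : ContDiff ℝ 3 K) (v w : ℝ × ℝ) :
    Continuous fun p : ℝ × ℝ => fderiv ℝ (fderiv ℝ K) p v w :=
  (((hK.fderiv_right (m := 2) (by norm_num)).fderiv_right (m := 1)
    (by norm_num)).continuous.clm_apply continuous_const).clm_apply continuous_const

lemma mcont3 (hK : ContDiff ℝ 3 K) (v w z : ℝ × ℝ) :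
    Continuous fun p : ℝ × ℝ => fderiv ℝ (fderiv ℝ (fderiv ℝ K)) p v w z :=
  (((((hK.fderiv_right (m := 2) (by norm_num)).fderiv_right (m := 1)
    (by norm_num)).fderiv_right (m := 0) (by norm_num)).continuous.clm_apply
      continuous_const).clm_apply continuous_const).clm_apply continuous_const

/-- Symmetry of the second derivative. -/
lemma msym (hK : ContDiff ℝ 3 K) (p v w : ℝ × ℝ) :
    fderiv ℝ (fderiv ℝ K) p v w = fderiv ℝ (fderiv ℝ K) p w v := by
  have h1 : ContDiff ℝ 2 (fderiv ℝ K) := hK.fderiv_right (by norm_num)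
  exact second_derivative_symmetric
    (fun q => (hK.differentiable (by norm_num) q).hasFDerivAt)
    ((h1.differentiable (by norm_num) p).hasFDerivAt) v w

/-- Identification of `deriv` in first variable. -/
lemma mid1x (hK : ContDiff ℝ 3 K) (x y : ℝ) :
    deriv (fun s => K (s, y)) x = fderiv ℝ K (x, y) (1, 0) :=
  (mline1 hK (pathx y x)).deriv

/-- Identification of `iteratedDeriv 3` in first variable. -/
lemma mid3x (hK : ContDiff ℝ 3 K) (x y : ℝ) :
    iteratedDeriv 3 (fun s => K (s, y)) x
      = fderiv ℝ (fderiv ℝ (fderiv ℝ K)) (x, y) (1, 0) (1, 0) (1, 0) := by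
  have e1 : deriv (fun s => K (s, y)) = fun s => fderiv ℝ K (s, y) (1, 0) :=
    funext fun s => (mline1 hK (pathx y s)).deriv
  have e2 : deriv (fun s => fderiv ℝ K (s, y) (1, 0))
      = fun s => fderiv ℝ (fderiv ℝ K) (s, y) (1, 0) (1, 0) :=
    funext fun s => (mline2 hK (pathx y s) _).deriv
  rw [show (3:ℕ) = 2 + 1 from rfl, iteratedDeriv_succ,
    show (2:ℕ) = 1 + 1 from rfl, iteratedDeriv_succ, iteratedDeriv_one, e1, e2]
  exact (mline3 hK (pathx y x) _ _).deriv

lemma mid3y (hK : ContDiff ℝ 3 K) (x y : ℝ) :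
    iteratedDeriv 3 (fun r => K (x, r)) y
      = fderiv ℝ (fderiv ℝ (fderiv ℝ K)) (x, y) (0, 1) (0, 1) (0, 1) := by
  have e1 : deriv (fun r => K (x, r)) = fun r => fderiv ℝ K (x, r) (0, 1) :=
    funext fun r => (mline1 hK (pathy x r)).deriv
  have e2 : deriv (fun r => fderiv ℝ K (x, r) (0, 1))
      = fun r => fderiv ℝ (fderiv ℝ K) (x, r) (0, 1) (0, 1) :=
    funext fun r => (mline2 hK (pathy x r) _).deriv
  rw [show (3:ℕ) = 2 + 1 from rfl, iteratedDeriv_succ,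
    show (2:ℕ) = 1 + 1 from rfl, iteratedDeriv_succ, iteratedDeriv_one, e1, e2]
  exact (mline3 hK (pathy x y) _ _).deriv

end Machinery
open MeasureTheory Set intervalIntegral

section Diag

variable {L lam : ℝ} {k : ℝ → ℝ → ℝ}

-- decomposition of directions
lemma dir_split : ((1:ℝ), (1:ℝ)) = ((1:ℝ), (0:ℝ)) + ((0:ℝ), (1:ℝ)) := by norm_num

lemma dg0 (hL : 0 < L) (hk : ContDiff ℝ 3 (Function.uncurry k)) (hkdiag : ∀ x ∈ Set.Icc (0:ℝ) L, k x x = 0) :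
    ∀ x ∈ Set.Icc (0:ℝ) L, fderiv ℝ (Function.uncurry k) (x, x) (1, 1) = 0 := by
  intro x hx
  exact deriv_eq_on_Icc (f := fun s => Function.uncurry k (s, s)) hL hx
    (mline1 hk (pathd x)) (hasDerivAt_const x 0) (fun y hy => hkdiag y hy)

lemma dg1 (hL : 0 < L) (hk : ContDiff ℝ 3 (Function.uncurry k)) (hkxdiag : ∀ x ∈ Set.Icc (0:ℝ) L, deriv (fun s => k s x) x = lam / 3 * (L - x)) :
    ∀ x ∈ Set.Icc (0:ℝ) L, fderiv ℝ (Function.uncurry k) (x, x) (1, 0) = lam / 3 * (L - x) := by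
  intro x hx
  rw [← hkxdiag x hx]
  exact (mid1x hk x x).symm

lemma dg2 (hL : 0 < L) (hk : ContDiff ℝ 3 (Function.uncurry k)) (hkdiag : ∀ x ∈ Set.Icc (0:ℝ) L, k x x = 0)
    (hkxdiag : ∀ x ∈ Set.Icc (0:ℝ) L, deriv (fun s => k s x) x = lam / 3 * (L - x)) :
    ∀ x ∈ Set.Icc (0:ℝ) L,
      fderiv ℝ (Function.uncurry k) (x, x) (0, 1) = -(lam / 3 * (L - x)) := by
  intro x hx
  have h0 := dg0 hL hk hkdiag x hx
  rw [dir_split, map_add] at h0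
  have h1 := dg1 hL hk hkxdiag x hx
  linarith

lemma dg3 (hL : 0 < L) (hk : ContDiff ℝ 3 (Function.uncurry k)) (hkxdiag : ∀ x ∈ Set.Icc (0:ℝ) L, deriv (fun s => k s x) x = lam / 3 * (L - x)) :
    ∀ x ∈ Set.Icc (0:ℝ) L,
      fderiv ℝ (fderiv ℝ (Function.uncurry k)) (x, x) (1, 1) (1, 0) = -(lam / 3) := by
  intro x hx
  have hg : HasDerivAt (fun s : ℝ => lam / 3 * (L - s)) (-(lam / 3)) x := by
    have := ((hasDerivAt_const x L).sub (hasDerivAt_id x)).const_mul (lam / 3)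
    simpa using this
  exact deriv_eq_on_Icc hL hx (mline2 hk (pathd x) _) hg (dg1 hL hk hkxdiag)

lemma dg4 (hL : 0 < L) (hk : ContDiff ℝ 3 (Function.uncurry k)) (hkdiag : ∀ x ∈ Set.Icc (0:ℝ) L, k x x = 0) :
    ∀ x ∈ Set.Icc (0:ℝ) L,
      fderiv ℝ (fderiv ℝ (Function.uncurry k)) (x, x) (1, 1) (1, 1) = 0 := by
  intro x hx
  exact deriv_eq_on_Icc hL hx (mline2 hk (pathd x) _) (hasDerivAt_const x 0)
    (dg0 hL hk hkdiag)

lemma dg6 (hL : 0 < L) (hk : ContDiff ℝ 3 (Function.uncurry k)) (hkdiag : ∀ x ∈ Set.Icc (0:ℝ) L, k x x = 0)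
    (hkxdiag : ∀ x ∈ Set.Icc (0:ℝ) L, deriv (fun s => k s x) x = lam / 3 * (L - x)) :
    ∀ x ∈ Set.Icc (0:ℝ) L,
      fderiv ℝ (fderiv ℝ (Function.uncurry k)) (x, x) (0, 1) (0, 1)
        - fderiv ℝ (fderiv ℝ (Function.uncurry k)) (x, x) (1, 0) (1, 0)
        = 2 * lam / 3 := by
  intro x hx
  have h3 := dg3 hL hk hkxdiag x hx
  have h4 := dg4 hL hk hkdiag x hx
  rw [dir_split] at h3 h4
  simp only [map_add, ContinuousLinearMap.add_apply] at h3 h4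
  have hs := msym hk (x, x) (1, 0) (0, 1)
  linarith

end Diag
open MeasureTheory Set intervalIntegral

noncomputable section KdVCore

/-- partial derivatives of the kernel -/
def kX (k : ℝ → ℝ → ℝ) (x y : ℝ) : ℝ := fderiv ℝ (Function.uncurry k) (x, y) (1, 0)
def kY (k : ℝ → ℝ → ℝ) (x y : ℝ) : ℝ := fderiv ℝ (Function.uncurry k) (x, y) (0, 1)
def kXX (k : ℝ → ℝ → ℝ) (x y : ℝ) : ℝ :=
  fderiv ℝ (fderiv ℝ (Function.uncurry k)) (x, y) (1, 0) (1, 0)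
def kYY (k : ℝ → ℝ → ℝ) (x y : ℝ) : ℝ :=
  fderiv ℝ (fderiv ℝ (Function.uncurry k)) (x, y) (0, 1) (0, 1)
def kX3 (k : ℝ → ℝ → ℝ) (x y : ℝ) : ℝ :=
  fderiv ℝ (fderiv ℝ (fderiv ℝ (Function.uncurry k))) (x, y) (1, 0) (1, 0) (1, 0)
def kY3 (k : ℝ → ℝ → ℝ) (x y : ℝ) : ℝ :=
  fderiv ℝ (fderiv ℝ (fderiv ℝ (Function.uncurry k))) (x, y) (0, 1) (0, 1) (0, 1)
def kD1 (k : ℝ → ℝ → ℝ) (x : ℝ) : ℝ := fderiv ℝ (Function.uncurry k) (x, x) (1, 1)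
def kD2a (k : ℝ → ℝ → ℝ) (x : ℝ) : ℝ :=
  fderiv ℝ (fderiv ℝ (Function.uncurry k)) (x, x) (1, 1) (1, 0)
def kD2b (k : ℝ → ℝ → ℝ) (x : ℝ) : ℝ :=
  fderiv ℝ (fderiv ℝ (Function.uncurry k)) (x, x) (1, 1) (1, 1)

/-- partial derivatives of the state -/
def uT (u : ℝ → ℝ → ℝ) (t x : ℝ) : ℝ := fderiv ℝ (Function.uncurry u) (t, x) (1, 0)
def uY (u : ℝ → ℝ → ℝ) (t x : ℝ) : ℝ := fderiv ℝ (Function.uncurry u) (t, x) (0, 1)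
def uYY (u : ℝ → ℝ → ℝ) (t x : ℝ) : ℝ :=
  fderiv ℝ (fderiv ℝ (Function.uncurry u)) (t, x) (0, 1) (0, 1)
def uY3 (u : ℝ → ℝ → ℝ) (t x : ℝ) : ℝ :=
  fderiv ℝ (fderiv ℝ (fderiv ℝ (Function.uncurry u))) (t, x) (0, 1) (0, 1) (0, 1)

/-- the backstepping transform and its derivatives -/
def wF (k u : ℝ → ℝ → ℝ) (L t x : ℝ) : ℝ := u t x - ∫ y in x..L, k x y * u t y

def W1 (k u : ℝ → ℝ → ℝ) (L t x : ℝ) : ℝ :=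
  uY u t x - ((∫ y in x..L, kX k x y * u t y) - k x x * u t x)

def W2 (k u : ℝ → ℝ → ℝ) (L t x : ℝ) : ℝ :=
  uYY u t x - (((∫ y in x..L, kXX k x y * u t y) - kX k x x * u t x)
    - (kD1 k x * u t x + k x x * uY u t x))

def W3 (k u : ℝ → ℝ → ℝ) (L t x : ℝ) : ℝ :=
  uY3 u t x - ((((∫ y in x..L, kX3 k x y * u t y) - kXX k x x * u t x)
    - (kD2a k x * u t x + kX k x x * uY u t x))
    - ((kD2b k x * u t x + kD1 k x * uY u t x)
      + (kD1 k x * uY u t x + k x x * uYY u t x)))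

def wT (k u : ℝ → ℝ → ℝ) (L t x : ℝ) : ℝ := uT u t x - ∫ y in x..L, k x y * uT u t y

section Core

variable {k u : ℝ → ℝ → ℝ} {L : ℝ}

lemma contRight {f : ℝ → ℝ → ℝ} (hf : Continuous (Function.uncurry f)) (t : ℝ) :
    Continuous fun y => f t y := hf.comp (Continuous.prodMk_right t)

-- continuity of integrands
lemma contI0 (hk : ContDiff ℝ 3 (Function.uncurry k)) (hu : ContDiff ℝ 3 (Function.uncurry u))
    (t : ℝ) : Continuous (Function.uncurry fun s y => k s y * u t y) :=
  hk.continuous.mul ((contRight hu.continuous t).comp continuous_snd)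

lemma contI1 (hk : ContDiff ℝ 3 (Function.uncurry k)) (hu : ContDiff ℝ 3 (Function.uncurry u))
    (t : ℝ) : Continuous (Function.uncurry fun s y => kX k s y * u t y) :=
  (mcont1 hk (1, 0)).mul ((contRight hu.continuous t).comp continuous_snd)

lemma contI2 (hk : ContDiff ℝ 3 (Function.uncurry k)) (hu : ContDiff ℝ 3 (Function.uncurry u))
    (t : ℝ) : Continuous (Function.uncurry fun s y => kXX k s y * u t y) :=
  (mcont2 hk (1, 0) (1, 0)).mul ((contRight hu.continuous t).comp continuous_snd)

lemma contI3 (hk : ContDiff ℝ 3 (Function.uncurry k)) (hu : ContDiff ℝ 3 (Function.uncurry u))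
    (t : ℝ) : Continuous (Function.uncurry fun s y => kX3 k s y * u t y) :=
  (mcont3 hk (1, 0) (1, 0) (1, 0)).mul ((contRight hu.continuous t).comp continuous_snd)

-- derivatives of the integral terms
lemma hKint0 (hk : ContDiff ℝ 3 (Function.uncurry k)) (hu : ContDiff ℝ 3 (Function.uncurry u))
    (t x : ℝ) :
    HasDerivAt (fun s => ∫ y in s..L, k s y * u t y)
      ((∫ y in x..L, kX k x y * u t y) - k x x * u t x) x :=
  helperC (contI0 hk hu t) (contI1 hk hu t)
    (fun s y => (mline1 hk (pathx y s)).mul_const (u t y)) L x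

lemma hKint1 (hk : ContDiff ℝ 3 (Function.uncurry k)) (hu : ContDiff ℝ 3 (Function.uncurry u))
    (t x : ℝ) :
    HasDerivAt (fun s => ∫ y in s..L, kX k s y * u t y)
      ((∫ y in x..L, kXX k x y * u t y) - kX k x x * u t x) x :=
  helperC (contI1 hk hu t) (contI2 hk hu t)
    (fun s y => (mline2 hk (pathx y s) (1, 0)).mul_const (u t y)) L x

lemma hKint2 (hk : ContDiff ℝ 3 (Function.uncurry k)) (hu : ContDiff ℝ 3 (Function.uncurry u))
    (t x : ℝ) :
    HasDerivAt (fun s => ∫ y in s..L, kXX k s y * u t y)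
      ((∫ y in x..L, kX3 k x y * u t y) - kXX k x x * u t x) x :=
  helperC (contI2 hk hu t) (contI3 hk hu t)
    (fun s y => (mline3 hk (pathx y s) (1, 0) (1, 0)).mul_const (u t y)) L x

-- spatial derivatives of w
lemma hw_x (hk : ContDiff ℝ 3 (Function.uncurry k)) (hu : ContDiff ℝ 3 (Function.uncurry u))
    (t x : ℝ) : HasDerivAt (fun s => wF k u L t s) (W1 k u L t x) x :=
  (mline1 hu (pathy t x)).sub (hKint0 hk hu t x)

lemma hW1_x (hk : ContDiff ℝ 3 (Function.uncurry k)) (hu : ContDiff ℝ 3 (Function.uncurry u))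
    (t x : ℝ) : HasDerivAt (fun s => W1 k u L t s) (W2 k u L t x) x :=
  (mline2 hu (pathy t x) (0, 1)).sub
    ((hKint1 hk hu t x).sub ((mline1 hk (pathd x)).mul (mline1 hu (pathy t x))))

lemma hW2_x (hk : ContDiff ℝ 3 (Function.uncurry k)) (hu : ContDiff ℝ 3 (Function.uncurry u))
    (t x : ℝ) : HasDerivAt (fun s => W2 k u L t s) (W3 k u L t x) x :=
  (mline3 hu (pathy t x) (0, 1) (0, 1)).sub
    (((hKint2 hk hu t x).sub
        ((mline2 hk (pathd x) (1, 0)).mul (mline1 hu (pathy t x)))).sub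
      (((mline2 hk (pathd x) (1, 1)).mul (mline1 hu (pathy t x))).add
        ((mline1 hk (pathd x)).mul (mline2 hu (pathy t x) (0, 1)))))

-- time derivative of w
lemma hw_t (hk : ContDiff ℝ 3 (Function.uncurry k)) (hu : ContDiff ℝ 3 (Function.uncurry u))
    (t x : ℝ) : HasDerivAt (fun s => wF k u L s x) (wT k u L t x) t := by
  refine (mline1 hu (pathx x t)).sub
    (helperA (F := fun s y => k x y * u s y) (F' := fun s y => k x y * uT u s y)
      ?_ ?_ (fun s y => (mline1 hu (pathx y s)).const_mul (k x y)) x L t)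
  · exact ((contRight hk.continuous x).comp continuous_snd).mul
      (hu.continuous.comp (continuous_fst.prodMk continuous_snd))
  · exact ((contRight hk.continuous x).comp continuous_snd).mul
      ((mcont1 hu (1, 0)).comp (continuous_fst.prodMk continuous_snd))

-- joint continuity of w and wT
lemma cw (hk : ContDiff ℝ 3 (Function.uncurry k)) (hu : ContDiff ℝ 3 (Function.uncurry u)) :
    Continuous fun p : ℝ × ℝ => wF k u L p.1 p.2 := by
  refine hu.continuous.sub (helperD (F := fun p : ℝ × ℝ => fun y => k p.2 y * u p.1 y)
    ?_ continuous_snd L)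
  exact (hk.continuous.comp (continuous_fst.snd.prodMk continuous_snd)).mul
    (hu.continuous.comp (continuous_fst.fst.prodMk continuous_snd))

lemma cwT (hk : ContDiff ℝ 3 (Function.uncurry k)) (hu : ContDiff ℝ 3 (Function.uncurry u)) :
    Continuous fun p : ℝ × ℝ => wT k u L p.1 p.2 := by
  refine ((mcont1 hu (1, 0)).sub
    (helperD (F := fun p : ℝ × ℝ => fun y => k p.2 y * uT u p.1 y) ?_ continuous_snd L))
  exact (hk.continuous.comp (continuous_fst.snd.prodMk continuous_snd)).mul
    ((mcont1 hu (1, 0)).comp (continuous_fst.fst.prodMk continuous_snd))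

section ContPieces

variable (hk : ContDiff ℝ 3 (Function.uncurry k)) (hu : ContDiff ℝ 3 (Function.uncurry u))
  (t : ℝ)

private lemma cdiag : Continuous fun x : ℝ => ((x, x) : ℝ × ℝ) :=
  continuous_id.prodMk continuous_id

-- continuity in x (fixed t) of W1, W2, W3
lemma cW1 (hk : ContDiff ℝ 3 (Function.uncurry k)) (hu : ContDiff ℝ 3 (Function.uncurry u))
    (t : ℝ) : Continuous fun x => W1 k u L t x := by
  have c1 : Continuous fun x => uY u t x := (mcont1 hu (0, 1)).comp (Continuous.prodMk_right t)
  have c2 : Continuous fun x => ∫ y in x..L, kX k x y * u t y :=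
    helperD (X := ℝ) (F := fun x y => kX k x y * u t y) (contI1 hk hu t) continuous_id L
  have c3 : Continuous fun x => k x x * u t x :=
    (hk.continuous.comp cdiag).mul (contRight hu.continuous t)
  exact c1.sub (c2.sub c3)

lemma cW2 (hk : ContDiff ℝ 3 (Function.uncurry k)) (hu : ContDiff ℝ 3 (Function.uncurry u))
    (t : ℝ) : Continuous fun x => W2 k u L t x := by
  have c1 : Continuous fun x => uYY u t x :=
    (mcont2 hu (0, 1) (0, 1)).comp (Continuous.prodMk_right t)
  have c2 : Continuous fun x => ∫ y in x..L, kXX k x y * u t y :=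
    helperD (X := ℝ) (F := fun x y => kXX k x y * u t y) (contI2 hk hu t) continuous_id L
  have c3 : Continuous fun x => kX k x x * u t x :=
    ((mcont1 hk (1, 0)).comp cdiag).mul (contRight hu.continuous t)
  have c4 : Continuous fun x => kD1 k x * u t x :=
    ((mcont1 hk (1, 1)).comp cdiag).mul (contRight hu.continuous t)
  have c5 : Continuous fun x => k x x * uY u t x :=
    (hk.continuous.comp cdiag).mul ((mcont1 hu (0, 1)).comp (Continuous.prodMk_right t))
  exact c1.sub ((c2.sub c3).sub (c4.add c5))

lemma cW3 (hk : ContDiff ℝ 3 (Function.uncurry k)) (hu : ContDiff ℝ 3 (Function.uncurry u))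
    (t : ℝ) : Continuous fun x => W3 k u L t x := by
  have c1 : Continuous fun x => uY3 u t x :=
    (mcont3 hu (0, 1) (0, 1) (0, 1)).comp (Continuous.prodMk_right t)
  have c2 : Continuous fun x => ∫ y in x..L, kX3 k x y * u t y :=
    helperD (X := ℝ) (F := fun x y => kX3 k x y * u t y) (contI3 hk hu t) continuous_id L
  have c3 : Continuous fun x => kXX k x x * u t x :=
    ((mcont2 hk (1, 0) (1, 0)).comp cdiag).mul (contRight hu.continuous t)
  have c4 : Continuous fun x => kD2a k x * u t x :=
    ((mcont2 hk (1, 1) (1, 0)).comp cdiag).mul (contRight hu.continuous t)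
  have c5 : Continuous fun x => kX k x x * uY u t x :=
    ((mcont1 hk (1, 0)).comp cdiag).mul ((mcont1 hu (0, 1)).comp (Continuous.prodMk_right t))
  have c6 : Continuous fun x => kD2b k x * u t x :=
    ((mcont2 hk (1, 1) (1, 1)).comp cdiag).mul (contRight hu.continuous t)
  have c7 : Continuous fun x => kD1 k x * uY u t x :=
    ((mcont1 hk (1, 1)).comp cdiag).mul ((mcont1 hu (0, 1)).comp (Continuous.prodMk_right t))
  have c8 : Continuous fun x => k x x * uYY u t x :=
    (hk.continuous.comp cdiag).mul ((mcont2 hu (0, 1) (0, 1)).comp (Continuous.prodMk_right t))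
  exact c1.sub (((c2.sub c3).sub (c4.add c5)).sub ((c6.add c7).add (c7.add c8)))

end ContPieces

end Core
end KdVCore
open MeasureTheory Set intervalIntegral

section PDE
variable {k u : ℝ → ℝ → ℝ} {L lam : ℝ}

/-- The main computation: the transformed state satisfies the damped equation. -/
lemma main_pde (hL : 0 < L) (hlam : 0 < lam)
    (hk : ContDiff ℝ 3 (Function.uncurry k)) (hu : ContDiff ℝ 3 (Function.uncurry u))
    (hkpde : ∀ x y : ℝ, (x, y) ∈ {q : ℝ × ℝ | 0 ≤ q.1 ∧ q.1 ≤ L ∧ q.1 ≤ q.2 ∧ q.2 ≤ L} →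
      iteratedDeriv 3 (fun s => k s y) x + iteratedDeriv 3 (fun r => k x r) y
        + deriv (fun s => k s y) x + deriv (fun r => k x r) y = -lam * k x y)
    (hkL : ∀ x ∈ Set.Icc (0:ℝ) L, k x L = 0)
    (hkdiag : ∀ x ∈ Set.Icc (0:ℝ) L, k x x = 0)
    (hkxdiag : ∀ x ∈ Set.Icc (0:ℝ) L, deriv (fun s => k s x) x = lam / 3 * (L - x))
    {t : ℝ} (ht : 0 ≤ t)
    (hupde : ∀ x ∈ Set.Icc (0:ℝ) L,
        deriv (fun s => u s x) t + deriv (fun y => u t y) x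
          + iteratedDeriv 3 (fun y => u t y) x = 0)
    (huL : u t L = 0) (huxL : deriv (fun y => u t y) L = 0)
    {x : ℝ} (hx : x ∈ Set.Icc (0:ℝ) L) :
    wT k u L t x = -(W1 k u L t x) - W3 k u L t x - lam * wF k u L t x := by
  have hxL : x ≤ L := hx.2
  have hx0 : 0 ≤ x := hx.1
  -- translated u-PDE
  have hPDE : ∀ y ∈ Set.Icc (0:ℝ) L, uT u t y + uY u t y + uY3 u t y = 0 := by
    intro y hy
    have e1 : deriv (fun s => u s y) t = uT u t y :=
      (show HasDerivAt (fun s => u s y) (uT u t y) t from mline1 hu (pathx y t)).deriv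
    have e2 : deriv (fun r => u t r) y = uY u t y :=
      (show HasDerivAt (fun r => u t r) (uY u t y) y from mline1 hu (pathy t y)).deriv
    have e3 : iteratedDeriv 3 (fun r => u t r) y = uY3 u t y := mid3y hu t y
    have := hupde y hy
    rw [e1, e2, e3] at this
    linarith
  -- translated k-PDE
  have hKPDE : ∀ y ∈ Set.Icc x L,
      kX3 k x y + kY3 k x y + kX k x y + kY k x y = -lam * k x y := by
    intro y hy
    have e1 : iteratedDeriv 3 (fun s => k s y) x = kX3 k x y := mid3x hk x y
    have e2 : iteratedDeriv 3 (fun r => k x r) y = kY3 k x y := mid3y hk x y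
    have e3 : deriv (fun s => k s y) x = kX k x y :=
      (show HasDerivAt (fun s => k s y) (kX k x y) x from mline1 hk (pathx y x)).deriv
    have e4 : deriv (fun r => k x r) y = kY k x y :=
      (show HasDerivAt (fun r => k x r) (kY k x y) y from mline1 hk (pathy x y)).deriv
    have := hkpde x y ⟨hx0, hxL, hy.1, hy.2⟩
    rw [e1, e2, e3, e4] at this
    linarith
  -- boundary values
  have huYL : uY u t L = 0 := by
    have e2 : deriv (fun r => u t r) L = uY u t L :=
      (show HasDerivAt (fun r => u t r) (uY u t L) L from mline1 hu (pathy t L)).deriv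
    rw [← e2]; exact huxL
  have hkxL : k x L = 0 := hkL x hx
  have hkxx : k x x = 0 := hkdiag x hx
  -- continuity of all integrands in y (fixed t, x)
  have cy_k : Continuous fun y => k x y := contRight hk.continuous x
  have cy_kY : Continuous fun y => kY k x y := (mcont1 hk (0, 1)).comp (Continuous.prodMk_right x)
  have cy_kYY : Continuous fun y => kYY k x y :=
    (mcont2 hk (0, 1) (0, 1)).comp (Continuous.prodMk_right x)
  have cy_kY3 : Continuous fun y => kY3 k x y :=
    (mcont3 hk (0, 1) (0, 1) (0, 1)).comp (Continuous.prodMk_right x)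
  have cy_kX : Continuous fun y => kX k x y := (mcont1 hk (1, 0)).comp (Continuous.prodMk_right x)
  have cy_kX3 : Continuous fun y => kX3 k x y :=
    (mcont3 hk (1, 0) (1, 0) (1, 0)).comp (Continuous.prodMk_right x)
  have cy_u : Continuous fun y => u t y := contRight hu.continuous t
  have cy_uT : Continuous fun y => uT u t y := (mcont1 hu (1, 0)).comp (Continuous.prodMk_right t)
  have cy_uY : Continuous fun y => uY u t y := (mcont1 hu (0, 1)).comp (Continuous.prodMk_right t)
  have cy_uYY : Continuous fun y => uYY u t y :=
    (mcont2 hu (0, 1) (0, 1)).comp (Continuous.prodMk_right t)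
  have cy_uY3 : Continuous fun y => uY3 u t y :=
    (mcont3 hu (0, 1) (0, 1) (0, 1)).comp (Continuous.prodMk_right t)
  -- integration by parts chain
  have ibp1 : ∫ y in x..L, k x y * uY u t y
      = k x L * u t L - k x x * u t x - ∫ y in x..L, kY k x y * u t y := by
    apply intervalIntegral.integral_mul_deriv_eq_deriv_mul_of_hasDerivAt
      (cy_k.continuousOn) (cy_u.continuousOn)
      (fun r _ => mline1 hk (pathy x r)) (fun r _ => mline1 hu (pathy t r))
      ((cy_kY.intervalIntegrable _ _)) ((cy_uY.intervalIntegrable _ _))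
  have ibp2 : ∫ y in x..L, k x y * uY3 u t y
      = k x L * uYY u t L - k x x * uYY u t x - ∫ y in x..L, kY k x y * uYY u t y := by
    apply intervalIntegral.integral_mul_deriv_eq_deriv_mul_of_hasDerivAt
      (cy_k.continuousOn) (cy_uYY.continuousOn)
      (fun r _ => mline1 hk (pathy x r)) (fun r _ => mline3 hu (pathy t r) (0, 1) (0, 1))
      ((cy_kY.intervalIntegrable _ _)) ((cy_uY3.intervalIntegrable _ _))
  have ibp3 : ∫ y in x..L, kY k x y * uYY u t y
      = kY k x L * uY u t L - kY k x x * uY u t x - ∫ y in x..L, kYY k x y * uY u t y := by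
    apply intervalIntegral.integral_mul_deriv_eq_deriv_mul_of_hasDerivAt
      (cy_kY.continuousOn) (cy_uY.continuousOn)
      (fun r _ => mline2 hk (pathy x r) (0, 1)) (fun r _ => mline2 hu (pathy t r) (0, 1))
      ((cy_kYY.intervalIntegrable _ _)) ((cy_uYY.intervalIntegrable _ _))
  have ibp4 : ∫ y in x..L, kYY k x y * uY u t y
      = kYY k x L * u t L - kYY k x x * u t x - ∫ y in x..L, kY3 k x y * u t y := by
    apply intervalIntegral.integral_mul_deriv_eq_deriv_mul_of_hasDerivAt
      (cy_kYY.continuousOn) (cy_u.continuousOn)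
      (fun r _ => mline3 hk (pathy x r) (0, 1) (0, 1)) (fun r _ => mline1 hu (pathy t r))
      ((cy_kY3.intervalIntegrable _ _)) ((cy_uY.intervalIntegrable _ _))
  -- rewrite the time-integral using the u-PDE
  have hsub : Set.uIcc x L ⊆ Set.Icc (0:ℝ) L := by
    rw [Set.uIcc_of_le hxL]
    exact Set.Icc_subset_Icc hx0 le_rfl
  have hcong : ∫ y in x..L, k x y * uT u t y
      = ∫ y in x..L, k x y * (-(uY u t y) - uY3 u t y) := by
    apply intervalIntegral.integral_congr
    intro y hy
    have h1 := hPDE y (hsub hy)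
    have h2 : uT u t y = -(uY u t y) - uY3 u t y := by linarith
    show k x y * uT u t y = k x y * (-(uY u t y) - uY3 u t y)
    rw [h2]
  have hsplit : ∫ y in x..L, k x y * (-(uY u t y) - uY3 u t y)
      = -(∫ y in x..L, k x y * uY u t y) - ∫ y in x..L, k x y * uY3 u t y := by
    rw [show (fun y => k x y * (-(uY u t y) - uY3 u t y))
        = fun y => -(k x y * uY u t y) - k x y * uY3 u t y from funext fun y => by ring]
    rw [intervalIntegral.integral_sub (f := fun y => -(k x y * uY u t y))
      (g := fun y => k x y * uY3 u t y) ((cy_k.mul cy_uY).neg.intervalIntegrable _ _)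
      ((cy_k.mul cy_uY3).intervalIntegrable _ _), intervalIntegral.integral_neg]
  -- the integral identity from the kernel PDE
  have hZ2 : (∫ y in x..L, kX3 k x y * u t y) + (∫ y in x..L, kY3 k x y * u t y)
      + (∫ y in x..L, kX k x y * u t y) + (∫ y in x..L, kY k x y * u t y)
      = -lam * ∫ y in x..L, k x y * u t y := by
    rw [← intervalIntegral.integral_add (f := fun y => kX3 k x y * u t y)
        (g := fun y => kY3 k x y * u t y) ((cy_kX3.mul cy_u).intervalIntegrable _ _)
        ((cy_kY3.mul cy_u).intervalIntegrable _ _),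
      ← intervalIntegral.integral_add
        (f := fun y => kX3 k x y * u t y + kY3 k x y * u t y) (g := fun y => kX k x y * u t y)
        (((cy_kX3.mul cy_u).add (cy_kY3.mul cy_u)).intervalIntegrable _ _)
        ((cy_kX.mul cy_u).intervalIntegrable _ _),
      ← intervalIntegral.integral_add
        (f := fun y => kX3 k x y * u t y + kY3 k x y * u t y + kX k x y * u t y)
        (g := fun y => kY k x y * u t y)
        ((((cy_kX3.mul cy_u).add (cy_kY3.mul cy_u)).add (cy_kX.mul cy_u)).intervalIntegrable _ _)
        ((cy_kY.mul cy_u).intervalIntegrable _ _),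
      ← intervalIntegral.integral_const_mul]
    apply intervalIntegral.integral_congr
    intro y hy
    have h1 := hKPDE y (by rw [Set.uIcc_of_le hxL] at hy; exact hy)
    show kX3 k x y * u t y + kY3 k x y * u t y + kX k x y * u t y + kY k x y * u t y
        = -lam * (k x y * u t y)
    linear_combination u t y * h1
  -- diagonal values
  have d1 : kX k x x = lam / 3 * (L - x) := dg1 hL hk hkxdiag x hx
  have d2 : kY k x x = -(lam / 3 * (L - x)) := dg2 hL hk hkdiag hkxdiag x hx
  have d3 : kD1 k x = 0 := dg0 hL hk hkdiag x hx
  have d4 : kD2b k x = 0 := dg4 hL hk hkdiag x hx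
  have d5 : kD2a k x = -(lam / 3) := dg3 hL hk hkxdiag x hx
  have d6 : kYY k x x - kXX k x x = 2 * lam / 3 := dg6 hL hk hkdiag hkxdiag x hx
  -- the expanded formula for wT
  have E10 : wT k u L t x = uT u t x - (∫ y in x..L, kY k x y * u t y)
      + kY k x x * uY u t x - kYY k x x * u t x - ∫ y in x..L, kY3 k x y * u t y := by
    simp only [wT]
    rw [hcong, hsplit, ibp1, ibp2, ibp3, ibp4, huL, huYL, hkxL, hkxx]
    ring
  -- final assembly
  have hPDEx := hPDE x hx
  simp only [W1, W3, wF] at *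
  rw [E10, d1, d2, d3, d4, d5, hkxx]
  linear_combination hPDEx - hZ2 - (u t x) * d6
end PDE
open MeasureTheory Set intervalIntegral

section Energy
variable {k u : ℝ → ℝ → ℝ} {L lam : ℝ}

lemma energy_decay (hL : 0 < L) (hlam : 0 < lam)
    (hk : ContDiff ℝ 3 (Function.uncurry k)) (hu : ContDiff ℝ 3 (Function.uncurry u))
    (hkpde : ∀ x y : ℝ, (x, y) ∈ {q : ℝ × ℝ | 0 ≤ q.1 ∧ q.1 ≤ L ∧ q.1 ≤ q.2 ∧ q.2 ≤ L} →
      iteratedDeriv 3 (fun s => k s y) x + iteratedDeriv 3 (fun r => k x r) y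
        + deriv (fun s => k s y) x + deriv (fun r => k x r) y = -lam * k x y)
    (hkL : ∀ x ∈ Set.Icc (0:ℝ) L, k x L = 0)
    (hkdiag : ∀ x ∈ Set.Icc (0:ℝ) L, k x x = 0)
    (hkxdiag : ∀ x ∈ Set.Icc (0:ℝ) L, deriv (fun s => k s x) x = lam / 3 * (L - x))
    (hupde : ∀ t ≥ (0:ℝ), ∀ x ∈ Set.Icc (0:ℝ) L,
        deriv (fun s => u s x) t + deriv (fun y => u t y) x
          + iteratedDeriv 3 (fun y => u t y) x = 0)
    (huL : ∀ t ≥ (0:ℝ), u t L = 0)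
    (huxL : ∀ t ≥ (0:ℝ), deriv (fun y => u t y) L = 0)
    (hfb : ∀ t ≥ (0:ℝ), u t 0 = ∫ y in (0:ℝ)..L, k 0 y * u t y) :
    ∀ t ≥ (0:ℝ), (∫ x in (0:ℝ)..L, (wF k u L t x) ^ 2)
      ≤ Real.exp (-2 * lam * t) * ∫ x in (0:ℝ)..L, (wF k u L 0 x) ^ 2 := by
  set E : ℝ → ℝ := fun t => ∫ x in (0:ℝ)..L, (wF k u L t x) ^ 2 with hEdef
  have cwx : ∀ t : ℝ, Continuous fun x => wF k u L t x := fun t =>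
    (cw hk hu).comp (Continuous.prodMk_right t)
  have cwTx : ∀ t : ℝ, Continuous fun x => wT k u L t x := fun t =>
    (cwT hk hu).comp (Continuous.prodMk_right t)
  -- derivative of the energy
  have hE' : ∀ t : ℝ, HasDerivAt E (∫ x in (0:ℝ)..L, 2 * wF k u L t x * wT k u L t x) t := by
    intro t
    apply helperA (F := fun s x => (wF k u L s x) ^ 2)
      (F' := fun s x => 2 * wF k u L s x * wT k u L s x)
    · exact (cw hk hu).pow 2
    · exact (continuous_const.mul (cw hk hu)).mul (cwT hk hu)
    · intro s x
      have h := (hw_t (L := L) hk hu s x).pow 2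
      refine h.congr_deriv ?_
      push_cast
      ring
  -- boundary values of w and W1
  have bwL : ∀ t ≥ (0:ℝ), wF k u L t L = 0 := by
    intro t ht
    simp [wF, intervalIntegral.integral_same, huL t ht]
  have bw0 : ∀ t ≥ (0:ℝ), wF k u L t 0 = 0 := by
    intro t ht
    simp only [wF]
    rw [← hfb t ht]
    ring
  have bW1L : ∀ t ≥ (0:ℝ), W1 k u L t L = 0 := by
    intro t ht
    have huYL : uY u t L = 0 := by
      have e2 : deriv (fun r => u t r) L = uY u t L :=
        (show HasDerivAt (fun r => u t r) (uY u t L) L from mline1 hu (pathy t L)).deriv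
      rw [← e2]; exact huxL t ht
    simp [W1, intervalIntegral.integral_same, huYL, huL t ht]
  -- the energy derivative identity for t ≥ 0
  have hkey : ∀ t ≥ (0:ℝ),
      (∫ x in (0:ℝ)..L, 2 * wF k u L t x * wT k u L t x)
        = -(2 * lam) * E t - (W1 k u L t 0) ^ 2 := by
    intro t ht
    have hcong : (∫ x in (0:ℝ)..L, 2 * wF k u L t x * wT k u L t x)
        = ∫ x in (0:ℝ)..L, (2 * wF k u L t x * (-(W1 k u L t x) - W3 k u L t x
            - lam * wF k u L t x)) := by
      apply intervalIntegral.integral_congr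
      intro x hx
      rw [Set.uIcc_of_le hL.le] at hx
      show 2 * wF k u L t x * wT k u L t x = _
      rw [main_pde hL hlam hk hu hkpde hkL hkdiag hkxdiag ht (hupde t ht) (huL t ht)
        (huxL t ht) hx]
    have hsplit : (∫ x in (0:ℝ)..L, (2 * wF k u L t x * (-(W1 k u L t x) - W3 k u L t x
            - lam * wF k u L t x)))
        = -(∫ x in (0:ℝ)..L, 2 * wF k u L t x * W1 k u L t x)
          - (∫ x in (0:ℝ)..L, 2 * wF k u L t x * W3 k u L t x)
          - 2 * lam * ∫ x in (0:ℝ)..L, (wF k u L t x) ^ 2 := by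
      have i1 : IntervalIntegrable (fun x => 2 * wF k u L t x * W1 k u L t x)
          volume 0 L := ((continuous_const.mul (cwx t)).mul (cW1 hk hu t)).intervalIntegrable _ _
      have i2 : IntervalIntegrable (fun x => 2 * wF k u L t x * W3 k u L t x)
          volume 0 L := ((continuous_const.mul (cwx t)).mul (cW3 hk hu t)).intervalIntegrable _ _
      have i3 : IntervalIntegrable (fun x => 2 * lam * (wF k u L t x) ^ 2)
          volume 0 L :=
        (continuous_const.mul ((cwx t).pow 2)).intervalIntegrable _ _
      have hsum : (∫ x in (0:ℝ)..L, (2 * wF k u L t x * W1 k u L t x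
            + 2 * wF k u L t x * W3 k u L t x + 2 * lam * (wF k u L t x) ^ 2))
          = (∫ x in (0:ℝ)..L, 2 * wF k u L t x * W1 k u L t x)
            + (∫ x in (0:ℝ)..L, 2 * wF k u L t x * W3 k u L t x)
            + 2 * lam * ∫ x in (0:ℝ)..L, (wF k u L t x) ^ 2 := by
        rw [intervalIntegral.integral_add (i1.add i2) i3,
          intervalIntegral.integral_add i1 i2, intervalIntegral.integral_const_mul]
      have hneg : (∫ x in (0:ℝ)..L, (2 * wF k u L t x * (-(W1 k u L t x) - W3 k u L t x
            - lam * wF k u L t x)))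
          = -∫ x in (0:ℝ)..L, (2 * wF k u L t x * W1 k u L t x
            + 2 * wF k u L t x * W3 k u L t x + 2 * lam * (wF k u L t x) ^ 2) := by
        rw [← intervalIntegral.integral_neg]
        congr 1
        funext x
        ring
      rw [hneg, hsum]
      ring
    -- first piece vanishes
    have hA : (∫ x in (0:ℝ)..L, 2 * wF k u L t x * W1 k u L t x)
        = (wF k u L t L) ^ 2 - (wF k u L t 0) ^ 2 := by
      apply intervalIntegral.integral_eq_sub_of_hasDerivAt (f := fun x => (wF k u L t x) ^ 2)
      · intro x _
        have h := (hw_x (L := L) hk hu t x).pow 2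
        refine h.congr_deriv ?_
        push_cast
        ring
      · exact ((continuous_const.mul (cwx t)).mul (cW1 hk hu t)).intervalIntegrable _ _
    -- second piece: integrate by parts
    have hB2 : (∫ x in (0:ℝ)..L, 2 * W1 k u L t x * W2 k u L t x)
        = (W1 k u L t L) ^ 2 - (W1 k u L t 0) ^ 2 := by
      apply intervalIntegral.integral_eq_sub_of_hasDerivAt (f := fun x => (W1 k u L t x) ^ 2)
      · intro x _
        have h := (hW1_x (L := L) hk hu t x).pow 2
        refine h.congr_deriv ?_
        push_cast
        ring
      · exact ((continuous_const.mul (cW1 hk hu t)).mul (cW2 hk hu t)).intervalIntegrable _ _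
    have hB1 : (∫ x in (0:ℝ)..L, wF k u L t x * W3 k u L t x)
        = wF k u L t L * W2 k u L t L - wF k u L t 0 * W2 k u L t 0
          - ∫ x in (0:ℝ)..L, W1 k u L t x * W2 k u L t x := by
      apply intervalIntegral.integral_mul_deriv_eq_deriv_mul_of_hasDerivAt
        ((cwx t).continuousOn) ((cW2 hk hu t).continuousOn)
        (fun x _ => hw_x hk hu t x) (fun x _ => hW2_x hk hu t x)
        ((cW1 hk hu t).intervalIntegrable _ _) ((cW3 hk hu t).intervalIntegrable _ _)
    have hB : (∫ x in (0:ℝ)..L, 2 * wF k u L t x * W3 k u L t x)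
        = (W1 k u L t 0) ^ 2 := by
      have e2 : (∫ x in (0:ℝ)..L, 2 * wF k u L t x * W3 k u L t x)
          = 2 * ∫ x in (0:ℝ)..L, wF k u L t x * W3 k u L t x := by
        rw [← intervalIntegral.integral_const_mul]
        congr 1
        funext x
        ring
      have e3 : (∫ x in (0:ℝ)..L, 2 * W1 k u L t x * W2 k u L t x)
          = 2 * ∫ x in (0:ℝ)..L, W1 k u L t x * W2 k u L t x := by
        rw [← intervalIntegral.integral_const_mul]
        congr 1
        funext x
        ring
      rw [e2, hB1, bwL t ht, bw0 t ht]
      have h4 : (W1 k u L t L) ^ 2 - (W1 k u L t 0) ^ 2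
          = 2 * ∫ x in (0:ℝ)..L, W1 k u L t x * W2 k u L t x := by rw [← e3, hB2]
      rw [bW1L t ht] at h4
      nlinarith [h4]
    rw [hcong, hsplit, hA, hB, bwL t ht, bw0 t ht]
    simp only [hEdef]
    ring
  -- Lyapunov function
  set G : ℝ → ℝ := fun t => Real.exp (2 * lam * t) * E t with hGdef
  have hG' : ∀ t ≥ (0:ℝ), HasDerivAt G
      (-(Real.exp (2 * lam * t) * (W1 k u L t 0) ^ 2)) t := by
    intro t ht
    have h1 : HasDerivAt (fun s => Real.exp (2 * lam * s)) (2 * lam * Real.exp (2 * lam * t)) t := by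
      have h0 : HasDerivAt (fun s : ℝ => 2 * lam * s) (2 * lam) t := by
        simpa using (hasDerivAt_id t).const_mul (2 * lam)
      have h2 := h0.exp
      convert h2 using 1
      ring
    have h2 := h1.mul (hE' t)
    rw [hkey t ht] at h2
    refine h2.congr_deriv ?_
    ring
  have hGcont : Continuous G := by
    have : Continuous E := continuous_iff_continuousAt.mpr fun t => (hE' t).continuousAt
    exact (Real.continuous_exp.comp (continuous_const.mul continuous_id)).mul this
  have hGanti : AntitoneOn G (Set.Ici 0) := by
    apply antitoneOn_of_deriv_nonpos (convex_Ici 0) hGcont.continuousOn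
    · intro t ht
      rw [interior_Ici] at ht
      exact ((hG' t (le_of_lt ht)).differentiableAt).differentiableWithinAt
    · intro t ht
      rw [interior_Ici] at ht
      rw [(hG' t (le_of_lt ht)).deriv]
      have := Real.exp_pos (2 * lam * t)
      nlinarith [sq_nonneg (W1 k u L t 0)]
  intro t ht
  have h1 : G t ≤ G 0 := hGanti Set.self_mem_Ici ht ht
  have h2 : Real.exp (2 * lam * t) * E t ≤ E 0 := by
    simpa [hGdef] using h1
  have h3 : Real.exp (-2 * lam * t) * Real.exp (2 * lam * t) = 1 := by
    rw [← Real.exp_add]; norm_num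
  calc E t = Real.exp (-2 * lam * t) * (Real.exp (2 * lam * t) * E t) := by
        rw [← mul_assoc, h3, one_mul]
    _ ≤ Real.exp (-2 * lam * t) * E 0 :=
        mul_le_mul_of_nonneg_left h2 (Real.exp_pos _).le
end Energy
open MeasureTheory Set intervalIntegral

section Norms
variable {k : ℝ → ℝ → ℝ} {L M : ℝ}

/-- Bound on the Volterra integral term. -/
lemma volterra_bound (hL : 0 < L) (hM0 : 0 ≤ M)
    (hMk : ∀ x ∈ Set.Icc (0:ℝ) L, ∀ y ∈ Set.Icc (0:ℝ) L, |k x y| ≤ M)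
    (hk : Continuous (Function.uncurry k)) {f : ℝ → ℝ} (hf : Continuous f)
    {x : ℝ} (hx : x ∈ Set.Icc (0:ℝ) L) :
    |∫ y in x..L, k x y * f y| ≤ M * ∫ y in x..L, |f y| := by
  have hxL : x ≤ L := hx.2
  have h1 : |∫ y in x..L, k x y * f y| ≤ ∫ y in x..L, |k x y * f y| :=
    intervalIntegral.abs_integral_le_integral_abs hxL
  have h2 : (∫ y in x..L, |k x y * f y|) ≤ ∫ y in x..L, M * |f y| := by
    apply intervalIntegral.integral_mono_on hxL
      (((hk.comp (Continuous.prodMk_right x)).mul hf).abs.intervalIntegrable _ _)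
      ((continuous_const.mul hf.abs).intervalIntegrable _ _)
    intro y hy
    show |k x y * f y| ≤ M * |f y|
    rw [abs_mul]
    have := hMk x hx y ⟨le_trans hx.1 hy.1, hy.2⟩
    exact mul_le_mul_of_nonneg_right this (abs_nonneg _)
  rw [intervalIntegral.integral_const_mul] at h2
  linarith

lemma tail_le_total (hL : 0 < L) {f : ℝ → ℝ} (hf : Continuous f)
    {x : ℝ} (hx : x ∈ Set.Icc (0:ℝ) L) :
    (∫ y in x..L, |f y|) ≤ ∫ y in (0:ℝ)..L, |f y| := by
  have hsplit : (∫ y in (0:ℝ)..L, |f y|)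
      = (∫ y in (0:ℝ)..x, |f y|) + ∫ y in x..L, |f y| :=
    (intervalIntegral.integral_add_adjacent_intervals
      (hf.abs.intervalIntegrable _ _) (hf.abs.intervalIntegrable _ _)).symm
  have hpos : 0 ≤ ∫ y in (0:ℝ)..x, |f y| :=
    intervalIntegral.integral_nonneg hx.1 fun y _ => abs_nonneg _
  linarith

/-- `∫ w² ≤ (2 + 2 M² L²) ∫ f²`. -/
lemma trans_bound (hL : 0 < L) (hM0 : 0 ≤ M)
    (hMk : ∀ x ∈ Set.Icc (0:ℝ) L, ∀ y ∈ Set.Icc (0:ℝ) L, |k x y| ≤ M)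
    (hk : Continuous (Function.uncurry k)) {f : ℝ → ℝ} (hf : Continuous f) :
    (∫ x in (0:ℝ)..L, (f x - ∫ y in x..L, k x y * f y) ^ 2)
      ≤ (2 + 2 * M ^ 2 * L ^ 2) * ∫ x in (0:ℝ)..L, (f x) ^ 2 := by
  have hcs : (∫ y in (0:ℝ)..L, |f y|) ^ 2 ≤ L * ∫ y in (0:ℝ)..L, (f y) ^ 2 := cs_lemma hf hL
  have hfsq0 : 0 ≤ ∫ y in (0:ℝ)..L, (f y) ^ 2 :=
    intervalIntegral.integral_nonneg hL.le fun y _ => sq_nonneg _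
  have hptwise : ∀ x ∈ Set.Icc (0:ℝ) L,
      (f x - ∫ y in x..L, k x y * f y) ^ 2
        ≤ 2 * (f x) ^ 2 + 2 * M ^ 2 * L * ∫ y in (0:ℝ)..L, (f y) ^ 2 := by
    intro x hx
    have h1 := volterra_bound hL hM0 hMk hk hf hx
    have h2 := tail_le_total hL hf hx
    have h3 : |∫ y in x..L, k x y * f y| ≤ M * ∫ y in (0:ℝ)..L, |f y| := by
      calc |∫ y in x..L, k x y * f y| ≤ M * ∫ y in x..L, |f y| := h1
        _ ≤ M * ∫ y in (0:ℝ)..L, |f y| := mul_le_mul_of_nonneg_left h2 hM0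
    have h4 : (∫ y in x..L, k x y * f y) ^ 2 ≤ M ^ 2 * (L * ∫ y in (0:ℝ)..L, (f y) ^ 2) := by
      have h5 : (∫ y in x..L, k x y * f y) ^ 2 ≤ (M * ∫ y in (0:ℝ)..L, |f y|) ^ 2 := by
        rw [← sq_abs (∫ y in x..L, k x y * f y)]
        apply pow_le_pow_left₀ (abs_nonneg _) h3
      calc (∫ y in x..L, k x y * f y) ^ 2 ≤ (M * ∫ y in (0:ℝ)..L, |f y|) ^ 2 := h5
        _ = M ^ 2 * (∫ y in (0:ℝ)..L, |f y|) ^ 2 := by ring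
        _ ≤ M ^ 2 * (L * ∫ y in (0:ℝ)..L, (f y) ^ 2) :=
            mul_le_mul_of_nonneg_left hcs (by positivity)
    nlinarith [sq_nonneg (f x + ∫ y in x..L, k x y * f y)]
  have hIcont : Continuous fun x => ∫ y in x..L, k x y * f y :=
    helperD (X := ℝ) (F := fun x y => k x y * f y)
      (hk.mul (hf.comp continuous_snd)) continuous_id L
  have hmono := intervalIntegral.integral_mono_on (f := fun x => (f x - ∫ y in x..L, k x y * f y) ^ 2)
    (g := fun x => 2 * (f x) ^ 2 + 2 * M ^ 2 * L * ∫ y in (0:ℝ)..L, (f y) ^ 2) hL.le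
    (((hf.sub hIcont).pow 2).intervalIntegrable (μ := volume) 0 L)
    (((continuous_const.mul (hf.pow 2)).add continuous_const).intervalIntegrable 0 L)
    hptwise
  have heval : (∫ x in (0:ℝ)..L, (2 * (f x) ^ 2
      + 2 * M ^ 2 * L * ∫ y in (0:ℝ)..L, (f y) ^ 2))
      = 2 * (∫ x in (0:ℝ)..L, (f x) ^ 2)
        + (2 * M ^ 2 * L * ∫ y in (0:ℝ)..L, (f y) ^ 2) * L := by
    rw [intervalIntegral.integral_add (f := fun x => 2 * (f x) ^ 2)
      (g := fun _ => 2 * M ^ 2 * L * ∫ y in (0:ℝ)..L, (f y) ^ 2) ((continuous_const.mul (hf.pow 2)).intervalIntegrable _ _)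
      (intervalIntegrable_const), intervalIntegral.integral_const_mul,
      intervalIntegral.integral_const]
    simp [smul_eq_mul]
    ring
  rw [heval] at hmono
  nlinarith [hmono]

/-- `∫ f² ≤ (2 + 2 L² M² e^{2ML}) ∫ w²`. -/
lemma inv_bound (hL : 0 < L) (hM0 : 0 ≤ M)
    (hMk : ∀ x ∈ Set.Icc (0:ℝ) L, ∀ y ∈ Set.Icc (0:ℝ) L, |k x y| ≤ M)
    (hk : Continuous (Function.uncurry k)) {f : ℝ → ℝ} (hf : Continuous f) :
    (∫ x in (0:ℝ)..L, (f x) ^ 2)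
      ≤ (2 + 2 * L ^ 2 * M ^ 2 * Real.exp (2 * M * L))
        * ∫ x in (0:ℝ)..L, (f x - ∫ y in x..L, k x y * f y) ^ 2 := by
  set g : ℝ → ℝ := fun x => f x - ∫ y in x..L, k x y * f y with hgdef
  have hIcont : Continuous fun x => ∫ y in x..L, k x y * f y :=
    helperD (X := ℝ) (F := fun x y => k x y * f y)
      (hk.mul (hf.comp continuous_snd)) continuous_id L
  have hgcont : Continuous g := hf.sub hIcont
  -- the tail integral of |f|
  set φ : ℝ → ℝ := fun x => ∫ y in x..L, |f y| with hphidef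
  have hphi' : ∀ x : ℝ, HasDerivAt φ (-|f x|) x := by
    intro x
    have h1 : ∀ s : ℝ, φ s = (∫ y in (0:ℝ)..L, |f y|) - ∫ y in (0:ℝ)..s, |f y| := by
      intro s
      have := intervalIntegral.integral_add_adjacent_intervals
        (hf.abs.intervalIntegrable (μ := volume) 0 s) (hf.abs.intervalIntegrable s L)
      simp only [hphidef]
      linarith
    have h2 : HasDerivAt (fun s => (∫ y in (0:ℝ)..L, |f y|) - ∫ y in (0:ℝ)..s, |f y|)
        (-|f x|) x := by
      have e := (hasDerivAt_const x (∫ y in (0:ℝ)..L, |f y|)).sub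
        (intervalIntegral.integral_hasDerivAt_right
          (hf.abs.intervalIntegrable (μ := volume) 0 x)
          (hf.abs.stronglyMeasurableAtFilter _ _) hf.abs.continuousAt)
      exact e.congr_deriv (by simp)
    exact h2.congr_of_eventuallyEq (Filter.Eventually.of_forall fun s => h1 s)
  have hphi_nonneg : ∀ x ∈ Set.Icc (0:ℝ) L, 0 ≤ φ x := fun x hx =>
    intervalIntegral.integral_nonneg hx.2 fun y _ => abs_nonneg _
  -- pointwise inequality
  have hfg : ∀ x ∈ Set.Icc (0:ℝ) L, |f x| ≤ |g x| + M * φ x := by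
    intro x hx
    have h1 := volterra_bound hL hM0 hMk hk hf hx
    have h2 : f x = g x + ∫ y in x..L, k x y * f y := by simp [hgdef]
    calc |f x| ≤ |g x| + |∫ y in x..L, k x y * f y| := by rw [h2]; exact abs_add_le _ _
      _ ≤ |g x| + M * φ x := by exact add_le_add_right h1 _
  -- Gronwall via monotone auxiliary function
  set h : ℝ → ℝ := fun x => Real.exp (M * x) * φ x
      + Real.exp (M * L) * ∫ y in (0:ℝ)..x, |g y| with hhdef
  have hh' : ∀ x : ℝ, HasDerivAt h
      (M * Real.exp (M * x) * φ x + Real.exp (M * x) * (-|f x|)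
        + Real.exp (M * L) * |g x|) x := by
    intro x
    have e1 : HasDerivAt (fun s : ℝ => Real.exp (M * s)) (M * Real.exp (M * x)) x := by
      have h0 : HasDerivAt (fun s : ℝ => M * s) M x := by
        simpa using (hasDerivAt_id x).const_mul M
      have h2 := h0.exp
      convert h2 using 1
      ring
    have e2 := (e1.mul (hphi' x))
    have e3 : HasDerivAt (fun s => ∫ y in (0:ℝ)..s, |g y|) (|g x|) x :=
      intervalIntegral.integral_hasDerivAt_right
        (hgcont.abs.intervalIntegrable _ _) (hgcont.abs.stronglyMeasurableAtFilter _ _)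
        hgcont.abs.continuousAt
    have e4 := e2.add (e3.const_mul (Real.exp (M * L)))
    exact e4
  have hhmono : MonotoneOn h (Set.Icc 0 L) := by
    apply monotoneOn_of_deriv_nonneg (convex_Icc 0 L)
      (continuous_iff_continuousAt.mpr fun x => (hh' x).continuousAt).continuousOn
      (fun x _ => (hh' x).differentiableAt.differentiableWithinAt)
    intro x hx
    have hx' : x ∈ Set.Ioo (0:ℝ) L := by rwa [interior_Icc] at hx
    rw [(hh' x).deriv]
    have hb := hfg x ⟨hx'.1.le, hx'.2.le⟩
    have hex : Real.exp (M * x) ≤ Real.exp (M * L) :=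
      Real.exp_le_exp.mpr (mul_le_mul_of_nonneg_left hx'.2.le hM0)
    have hexpos : 0 < Real.exp (M * x) := Real.exp_pos _
    have habs : 0 ≤ |g x| := abs_nonneg _
    nlinarith [hb, hex, hexpos, habs]
  -- conclude φ x ≤ e^{ML} ∫₀ᴸ |g|
  have hphibound : ∀ x ∈ Set.Icc (0:ℝ) L, φ x ≤ Real.exp (M * L) * ∫ y in (0:ℝ)..L, |g y| := by
    intro x hx
    have h1 : h x ≤ h L := hhmono hx (Set.right_mem_Icc.mpr hL.le) hx.2
    have h2 : φ L = 0 := by simp [hphidef]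
    have h3 : 0 ≤ ∫ y in (0:ℝ)..x, |g y| :=
      intervalIntegral.integral_nonneg hx.1 fun y _ => abs_nonneg _
    have h4 : (∫ y in (0:ℝ)..x, |g y|) ≤ ∫ y in (0:ℝ)..L, |g y| := by
      have := intervalIntegral.integral_add_adjacent_intervals
        (hgcont.abs.intervalIntegrable (μ := volume) 0 x) (hgcont.abs.intervalIntegrable x L)
      have h5 : 0 ≤ ∫ y in x..L, |g y| :=
        intervalIntegral.integral_nonneg hx.2 fun y _ => abs_nonneg _
      linarith
    have h6 : 1 ≤ Real.exp (M * x) := by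
      rw [← Real.exp_zero]
      exact Real.exp_le_exp.mpr (mul_nonneg hM0 hx.1)
    have h7 : 0 ≤ φ x := hphi_nonneg x hx
    simp only [hhdef] at h1
    rw [h2] at h1
    nlinarith [h1, h6, h7, Real.exp_pos (M * L)]
  -- final pointwise bound and integration
  have hcsg : (∫ y in (0:ℝ)..L, |g y|) ^ 2 ≤ L * ∫ y in (0:ℝ)..L, (g y) ^ 2 :=
    cs_lemma hgcont hL
  have hgsq0 : 0 ≤ ∫ y in (0:ℝ)..L, (g y) ^ 2 :=
    intervalIntegral.integral_nonneg hL.le fun y _ => sq_nonneg _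
  have hptwise : ∀ x ∈ Set.Icc (0:ℝ) L,
      (f x) ^ 2 ≤ 2 * (g x) ^ 2
        + 2 * M ^ 2 * Real.exp (2 * M * L) * L * ∫ y in (0:ℝ)..L, (g y) ^ 2 := by
    intro x hx
    have h1 := hfg x hx
    have h2 := hphibound x hx
    have h3 : |f x| ≤ |g x| + M * (Real.exp (M * L) * ∫ y in (0:ℝ)..L, |g y|) := by
      have := mul_le_mul_of_nonneg_left h2 hM0
      linarith
    have h4 : (f x) ^ 2 ≤ (|g x| + M * (Real.exp (M * L) * ∫ y in (0:ℝ)..L, |g y|)) ^ 2 := by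
      rw [← sq_abs (f x)]
      apply pow_le_pow_left₀ (abs_nonneg _) h3
    have h5 : (|g x| + M * (Real.exp (M * L) * ∫ y in (0:ℝ)..L, |g y|)) ^ 2
        ≤ 2 * |g x| ^ 2 + 2 * (M * (Real.exp (M * L) * ∫ y in (0:ℝ)..L, |g y|)) ^ 2 := by
      nlinarith [sq_nonneg (|g x| - M * (Real.exp (M * L) * ∫ y in (0:ℝ)..L, |g y|))]
    have h6 : (M * (Real.exp (M * L) * ∫ y in (0:ℝ)..L, |g y|)) ^ 2
        = M ^ 2 * Real.exp (M * L) ^ 2 * (∫ y in (0:ℝ)..L, |g y|) ^ 2 := by ring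
    have h7 : Real.exp (M * L) ^ 2 = Real.exp (2 * M * L) := by
      rw [sq, ← Real.exp_add]
      congr 1
      ring
    have h8 : M ^ 2 * Real.exp (2 * M * L) * (∫ y in (0:ℝ)..L, |g y|) ^ 2
        ≤ M ^ 2 * Real.exp (2 * M * L) * (L * ∫ y in (0:ℝ)..L, (g y) ^ 2) :=
      mul_le_mul_of_nonneg_left hcsg (by positivity)
    rw [h6, h7] at h5
    rw [sq_abs] at h5
    nlinarith [h4, h5, h8]
  have hmono := intervalIntegral.integral_mono_on (f := fun x => (f x) ^ 2)
    (g := fun x => 2 * (g x) ^ 2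
      + 2 * M ^ 2 * Real.exp (2 * M * L) * L * ∫ y in (0:ℝ)..L, (g y) ^ 2) hL.le
    ((hf.pow 2).intervalIntegrable (μ := volume) 0 L)
    (((continuous_const.mul (hgcont.pow 2)).add continuous_const).intervalIntegrable 0 L)
    hptwise
  have heval : (∫ x in (0:ℝ)..L, (2 * (g x) ^ 2
      + 2 * M ^ 2 * Real.exp (2 * M * L) * L * ∫ y in (0:ℝ)..L, (g y) ^ 2))
      = 2 * (∫ x in (0:ℝ)..L, (g x) ^ 2)
        + (2 * M ^ 2 * Real.exp (2 * M * L) * L * ∫ y in (0:ℝ)..L, (g y) ^ 2) * L := by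
    rw [intervalIntegral.integral_add (f := fun x => 2 * (g x) ^ 2)
      (g := fun _ => 2 * M ^ 2 * Real.exp (2 * M * L) * L * ∫ y in (0:ℝ)..L, (g y) ^ 2)
      ((continuous_const.mul (hgcont.pow 2)).intervalIntegrable _ _)
      (intervalIntegrable_const), intervalIntegral.integral_const_mul,
      intervalIntegral.integral_const]
    simp [smul_eq_mul]
    ring
  rw [heval] at hmono
  nlinarith [hmono]
end Norms

open MeasureTheory Set intervalIntegral

/-- State-feedback stabilization for the linear KdV equation: if `k` solves the kernel PDE
system with parameter `λ` on the triangle, then there is `C > 0` such that every solution of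
the linear KdV equation with feedback `u(t,0) = ∫₀ᴸ k(0,y) u(t,y) dy` satisfies
`∫₀ᴸ u(t,x)² dx ≤ C e^{-2λt} ∫₀ᴸ u(0,x)² dx`. -/
theorem state_feedback_stabilization
    (L lam : ℝ) (hL : 0 < L) (hlam : 0 < lam)
    (k : ℝ → ℝ → ℝ) (hk : ContDiff ℝ 3 (Function.uncurry k))
    (hkpde : ∀ x y : ℝ, (x, y) ∈ {q : ℝ × ℝ | 0 ≤ q.1 ∧ q.1 ≤ L ∧ q.1 ≤ q.2 ∧ q.2 ≤ L} →
      iteratedDeriv 3 (fun s => k s y) x + iteratedDeriv 3 (fun r => k x r) y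
        + deriv (fun s => k s y) x + deriv (fun r => k x r) y = -lam * k x y)
    (hkL : ∀ x ∈ Set.Icc (0:ℝ) L, k x L = 0)
    (hkdiag : ∀ x ∈ Set.Icc (0:ℝ) L, k x x = 0)
    (hkxdiag : ∀ x ∈ Set.Icc (0:ℝ) L, deriv (fun s => k s x) x = lam / 3 * (L - x)) :
    ∃ C > (0:ℝ), ∀ u : ℝ → ℝ → ℝ, ContDiff ℝ (⊤ : ℕ∞) (Function.uncurry u) →
      (∀ t ≥ (0:ℝ), ∀ x ∈ Set.Icc (0:ℝ) L,
        deriv (fun s => u s x) t + deriv (fun y => u t y) x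
          + iteratedDeriv 3 (fun y => u t y) x = 0) →
      (∀ t ≥ (0:ℝ), u t L = 0) →
      (∀ t ≥ (0:ℝ), deriv (fun y => u t y) L = 0) →
      (∀ t ≥ (0:ℝ), u t 0 = ∫ y in (0:ℝ)..L, k 0 y * u t y) →
      ∀ t ≥ (0:ℝ),
        (∫ x in (0:ℝ)..L, (u t x) ^ 2)
          ≤ C * Real.exp (-2 * lam * t) * ∫ x in (0:ℝ)..L, (u 0 x) ^ 2 := by
  -- a uniform bound for the kernel on the square
  obtain ⟨M₀, hM₀⟩ := (isCompact_Icc.prod isCompact_Icc :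
      IsCompact (Set.Icc (0:ℝ) L ×ˢ Set.Icc (0:ℝ) L)).exists_bound_of_continuousOn
    hk.continuous.continuousOn
  set M : ℝ := max M₀ 0 with hMdef
  have hM0 : 0 ≤ M := le_max_right _ _
  have hMk : ∀ x ∈ Set.Icc (0:ℝ) L, ∀ y ∈ Set.Icc (0:ℝ) L, |k x y| ≤ M := by
    intro x hx y hy
    have := hM₀ (x, y) ⟨hx, hy⟩
    rw [Real.norm_eq_abs] at this
    exact le_trans this (le_max_left _ _)
  set C₁ : ℝ := 2 + 2 * L ^ 2 * M ^ 2 * Real.exp (2 * M * L) with hC₁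
  set C₂ : ℝ := 2 + 2 * M ^ 2 * L ^ 2 with hC₂
  refine ⟨C₁ * C₂, by positivity, ?_⟩
  intro u husm hupde huL huxL hfb t ht
  have hu : ContDiff ℝ 3 (Function.uncurry u) := husm.of_le (WithTop.coe_le_coe.mpr le_top)
  have cut : ∀ s : ℝ, Continuous fun x => u s x := fun s =>
    hu.continuous.comp (Continuous.prodMk_right s)
  -- step 1: from u to w at time t
  have h1 : (∫ x in (0:ℝ)..L, (u t x) ^ 2)
      ≤ C₁ * ∫ x in (0:ℝ)..L, (wF k u L t x) ^ 2 := by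
    have := inv_bound hL hM0 hMk hk.continuous (cut t)
    simpa only [wF, hC₁] using this
  -- step 2: energy decay for w
  have h2 : (∫ x in (0:ℝ)..L, (wF k u L t x) ^ 2)
      ≤ Real.exp (-2 * lam * t) * ∫ x in (0:ℝ)..L, (wF k u L 0 x) ^ 2 :=
    energy_decay hL hlam hk hu hkpde hkL hkdiag hkxdiag hupde huL huxL hfb t ht
  -- step 3: from w back to u at time 0
  have h3 : (∫ x in (0:ℝ)..L, (wF k u L 0 x) ^ 2)
      ≤ C₂ * ∫ x in (0:ℝ)..L, (u 0 x) ^ 2 := by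
    have := trans_bound hL hM0 hMk hk.continuous (cut 0)
    simpa only [wF, hC₂] using this
  -- chain the inequalities
  have hw0 : 0 ≤ ∫ x in (0:ℝ)..L, (wF k u L 0 x) ^ 2 :=
    intervalIntegral.integral_nonneg hL.le fun x _ => sq_nonneg _
  have hwt : 0 ≤ ∫ x in (0:ℝ)..L, (wF k u L t x) ^ 2 :=
    intervalIntegral.integral_nonneg hL.le fun x _ => sq_nonneg _
  have hC₁pos : (0:ℝ) < C₁ := by positivity
  have hexp : (0:ℝ) < Real.exp (-2 * lam * t) := Real.exp_pos _
  calc (∫ x in (0:ℝ)..L, (u t x) ^ 2)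
      ≤ C₁ * ∫ x in (0:ℝ)..L, (wF k u L t x) ^ 2 := h1
    _ ≤ C₁ * (Real.exp (-2 * lam * t) * ∫ x in (0:ℝ)..L, (wF k u L 0 x) ^ 2) :=
        mul_le_mul_of_nonneg_left h2 hC₁pos.le
    _ ≤ C₁ * (Real.exp (-2 * lam * t) * (C₂ * ∫ x in (0:ℝ)..L, (u 0 x) ^ 2)) := by
        apply mul_le_mul_of_nonneg_left _ hC₁pos.le
        exact mul_le_mul_of_nonneg_left h3 hexp.le
    _ = C₁ * C₂ * Real.exp (-2 * lam * t) * ∫ x in (0:ℝ)..L, (u 0 x) ^ 2 := by ring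
end

section
/- Let L > 0 and λ > 0. Let p : ℝ × ℝ → ℝ be a C² function such that p(0,y) = 0 for all y ∈ [0,L], and such that for all x ∈ [0,L]: 2·(d/dx)[p(x,x)] + p_x(x,x) + p_y(x,x) = 0 and (d²/dx²)[p(x,x)] + (d/dx)[p_x(x,x)] + p_{xx}(x,x) − p_{yy}(x,x) = λ. Then p(x,x) = 0 for all x ∈ [0,L] and p_x(x,x) = (λ/3)·x for all x ∈ [0,L]. -/
/-!
Write `u(x) = p_x(x,x)` and `v(x) = p_y(x,x)`. The first condition reads `3 (u + v) = 0`, so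
`x ↦ p(x,x)` is constant, hence zero as `p(0,0) = 0`. By symmetry of the Hessian the second
condition collapses to `3 u' = λ`, and `u(0) = -v(0) = 0` because `p(0,·)` vanishes on `[0,L]`.
-/

open Set Function

theorem eq_add_smul_of_hasDerivAt_Icc {E : Type*} [NormedAddCommGroup E] [NormedSpace ℝ E]
    {f : ℝ → E} {a b : ℝ} {c : E} (hf : ∀ x ∈ Icc a b, HasDerivAt f c x) :
    ∀ x ∈ Icc a b, f x = f a + (x - a) • c := by
  have hline : ∀ x, HasDerivAt (fun y => f a + (y - a) • c) c x := fun x => by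
    simpa using ((hasDerivAt_id x).sub_const a).smul_const c |>.const_add (f a)
  refine eq_of_has_deriv_right_eq (f' := fun _ => c)
    (fun x hx => (hf x (Ico_subset_Icc_self hx)).hasDerivWithinAt)
    (fun x _ => (hline x).hasDerivWithinAt)
    (fun x hx => (hf x hx).continuousAt.continuousWithinAt)
    (fun x _ => (hline x).continuousAt.continuousWithinAt) (by simp)

theorem HasDerivAt.eq_zero_of_eqOn_zero_Icc {E : Type*} [NormedAddCommGroup E] [NormedSpace ℝ E]
    {f : ℝ → E} {f' : E} {a b : ℝ} (hf : HasDerivAt f f' a) (hab : a < b)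
    (hzero : EqOn f 0 (Icc a b)) : f' = 0 :=
  (uniqueDiffOn_Icc hab a (left_mem_Icc.2 hab.le)).eq_deriv _ hf.hasDerivWithinAt
    ((hasDerivWithinAt_const a _ 0).congr_of_mem hzero (left_mem_Icc.2 hab.le))

section Curves

variable {E G : Type*} [NormedAddCommGroup E] [NormedSpace ℝ E] [NormedAddCommGroup G]
  [NormedSpace ℝ G] {f : E → G} {c : ℝ → E} {v : E} {t : ℝ}

theorem hasDerivAt_comp_of_differentiable (hf : Differentiable ℝ f) (hc : HasDerivAt c v t) :
    HasDerivAt (fun s => f (c s)) (fderiv ℝ f (c t) v) t :=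
  (hf (c t)).hasFDerivAt.comp_hasDerivAt t hc

theorem hasDerivAt_fderiv_apply_comp (hf : ContDiff ℝ 2 f) (hc : HasDerivAt c v t) (w : E) :
    HasDerivAt (fun s => fderiv ℝ f (c s) w) (fderiv ℝ (fderiv ℝ f) (c t) v w) t := by
  have hf' : Differentiable ℝ (fderiv ℝ f) :=
    (hf.fderiv_right (m := 1) (by norm_num)).differentiable (by norm_num)
  simpa using (hasDerivAt_comp_of_differentiable hf' hc).clm_apply (hasDerivAt_const t w)

theorem iteratedDeriv_two_comp_of_hasDerivAt (hf : ContDiff ℝ 2 f) (hc : ∀ s, HasDerivAt c v s) :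
    iteratedDeriv 2 (fun s => f (c s)) t = fderiv ℝ (fderiv ℝ f) (c t) v v := by
  have hderiv : deriv (fun s => f (c s)) = fun s => fderiv ℝ f (c s) v :=
    funext fun s => (hasDerivAt_comp_of_differentiable (hf.differentiable (by norm_num)) (hc s)).deriv
  rw [iteratedDeriv_succ, iteratedDeriv_one, hderiv]
  exact (hasDerivAt_fderiv_apply_comp hf (hc t) v).deriv

end Curves

theorem ContinuousLinearMap.apply_one_one {G : Type*} [AddCommGroup G] [Module ℝ G]
    [TopologicalSpace G] (ℓ : ℝ × ℝ →L[ℝ] G) : ℓ (1, 1) = ℓ (1, 0) + ℓ (0, 1) := by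
  rw [← map_add]; simp

/-- For a symmetric Hessian `B`, the combination of second derivatives in the second diagonal
condition is `3` times the derivative of `x ↦ p_x(x,x)`. -/
theorem ContinuousLinearMap.diag_combination_eq_three_mul {B : ℝ × ℝ →L[ℝ] ℝ × ℝ →L[ℝ] ℝ}
    (hB : ∀ v w, B v w = B w v) :
    B (1, 1) (1, 1) + B (1, 1) (1, 0) + B (1, 0) (1, 0) - B (0, 1) (0, 1)
      = 3 * B (1, 1) (1, 0) := by
  simp only [apply_one_one, B.apply_one_one, add_apply, hB (0, 1) (1, 0)]
  ring

section TwoVariables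

variable {p : ℝ → ℝ → ℝ}

theorem hasDerivAt_diag_apply (hp : Differentiable ℝ (uncurry p)) (x : ℝ) :
    HasDerivAt (fun s => p s s) (fderiv ℝ (uncurry p) (x, x) (1, 1)) x :=
  hasDerivAt_comp_of_differentiable hp ((hasDerivAt_id x).prodMk (hasDerivAt_id x))

theorem hasDerivAt_apply_const (hp : Differentiable ℝ (uncurry p)) (x b : ℝ) :
    HasDerivAt (fun s => p s b) (fderiv ℝ (uncurry p) (x, b) (1, 0)) x :=
  hasDerivAt_comp_of_differentiable hp ((hasDerivAt_id x).prodMk (hasDerivAt_const x b))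

theorem hasDerivAt_const_apply (hp : Differentiable ℝ (uncurry p)) (a x : ℝ) :
    HasDerivAt (fun r => p a r) (fderiv ℝ (uncurry p) (a, x) (0, 1)) x :=
  hasDerivAt_comp_of_differentiable hp ((hasDerivAt_const x a).prodMk (hasDerivAt_id x))

theorem hasDerivAt_deriv_apply_const_diag (hp : ContDiff ℝ 2 (uncurry p)) (x : ℝ) :
    HasDerivAt (fun s => deriv (fun a => p a s) s)
      (fderiv ℝ (fderiv ℝ (uncurry p)) (x, x) (1, 1) (1, 0)) x := by
  have hpd : Differentiable ℝ (uncurry p) := hp.differentiable (by norm_num)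
  simp only [fun s => (hasDerivAt_apply_const hpd s s).deriv]
  exact hasDerivAt_fderiv_apply_comp hp ((hasDerivAt_id x).prodMk (hasDerivAt_id x)) (1, 0)

theorem iteratedDeriv_two_diag_apply (hp : ContDiff ℝ 2 (uncurry p)) (x : ℝ) :
    iteratedDeriv 2 (fun s => p s s) x = fderiv ℝ (fderiv ℝ (uncurry p)) (x, x) (1, 1) (1, 1) :=
  iteratedDeriv_two_comp_of_hasDerivAt (f := uncurry p) (c := fun s => (s, s)) hp
    fun s => (hasDerivAt_id s).prodMk (hasDerivAt_id s)

theorem iteratedDeriv_two_apply_const (hp : ContDiff ℝ 2 (uncurry p)) (x b : ℝ) :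
    iteratedDeriv 2 (fun s => p s b) x = fderiv ℝ (fderiv ℝ (uncurry p)) (x, b) (1, 0) (1, 0) :=
  iteratedDeriv_two_comp_of_hasDerivAt (f := uncurry p) (c := fun s => (s, b)) hp
    fun s => (hasDerivAt_id s).prodMk (hasDerivAt_const s b)

theorem iteratedDeriv_two_const_apply (hp : ContDiff ℝ 2 (uncurry p)) (a x : ℝ) :
    iteratedDeriv 2 (fun r => p a r) x = fderiv ℝ (fderiv ℝ (uncurry p)) (a, x) (0, 1) (0, 1) :=
  iteratedDeriv_two_comp_of_hasDerivAt (f := uncurry p) (c := fun r => (a, r)) hp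
    fun s => (hasDerivAt_const s a).prodMk (hasDerivAt_id s)

end TwoVariables

theorem observer_kernel_diagonal_conditions_general
    (L lam : ℝ) (hL : 0 < L)
    (p : ℝ → ℝ → ℝ) (hp : ContDiff ℝ 2 (Function.uncurry p))
    (hp0 : ∀ y ∈ Set.Icc (0:ℝ) L, p 0 y = 0)
    (hdiag1 : ∀ x ∈ Set.Icc (0:ℝ) L,
      2 * deriv (fun s => p s s) x + deriv (fun s => p s x) x + deriv (fun r => p x r) x = 0)
    (hdiag2 : ∀ x ∈ Set.Icc (0:ℝ) L,
      iteratedDeriv 2 (fun s => p s s) x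
        + deriv (fun s => deriv (fun a => p a s) s) x
        + iteratedDeriv 2 (fun s => p s x) x
        - iteratedDeriv 2 (fun r => p x r) x = lam) :
    (∀ x ∈ Set.Icc (0:ℝ) L, p x x = 0) ∧
    (∀ x ∈ Set.Icc (0:ℝ) L, deriv (fun s => p s x) x = lam / 3 * x) := by
  have hpd : Differentiable ℝ (uncurry p) := hp.differentiable (by norm_num)
  have h0 : (0 : ℝ) ∈ Icc 0 L := left_mem_Icc.2 hL.le
  have hdiag_deriv : ∀ x ∈ Icc 0 L, fderiv ℝ (uncurry p) (x, x) (1, 1) = 0 := fun x hx => by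
    have h := hdiag1 x hx
    rw [(hasDerivAt_diag_apply hpd x).deriv, (hasDerivAt_apply_const hpd x x).deriv,
      (hasDerivAt_const_apply hpd x x).deriv] at h
    linarith [(fderiv ℝ (uncurry p) (x, x)).apply_one_one]
  have hmixed : ∀ x ∈ Icc 0 L, fderiv ℝ (fderiv ℝ (uncurry p)) (x, x) (1, 1) (1, 0) = lam / 3 :=
    fun x hx => by
      have h := hdiag2 x hx
      rw [iteratedDeriv_two_diag_apply hp, (hasDerivAt_deriv_apply_const_diag hp x).deriv,
        iteratedDeriv_two_apply_const hp, iteratedDeriv_two_const_apply hp,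
        ContinuousLinearMap.diag_combination_eq_three_mul
          (hp.contDiffAt.isSymmSndFDerivAt (by simp))] at h
      linarith
  have hsnd0 : fderiv ℝ (uncurry p) (0, 0) (0, 1) = 0 :=
    (hasDerivAt_const_apply hpd 0 0).eq_zero_of_eqOn_zero_Icc hL hp0
  have hfst0 : deriv (fun s => p s 0) 0 = 0 := by
    rw [(hasDerivAt_apply_const hpd 0 0).deriv]
    linarith [(fderiv ℝ (uncurry p) (0, 0)).apply_one_one, hdiag_deriv 0 h0]
  refine ⟨fun x hx => ?_, fun x hx => ?_⟩
  · have h := eq_add_smul_of_hasDerivAt_Icc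
      (fun y hy => hdiag_deriv y hy ▸ hasDerivAt_diag_apply hpd y) x hx
    simpa [hp0 0 h0] using h
  · have h := eq_add_smul_of_hasDerivAt_Icc
      (fun y hy => hmixed y hy ▸ hasDerivAt_deriv_apply_const_diag hp y) x hx
    simp only [hfst0, zero_add, sub_zero, smul_eq_mul] at h
    rw [h, mul_comm]

/-- Diagonal boundary conditions of the observer kernel: if `p` is `C²`, vanishes on
`{0} × [0,L]`, and its diagonal traces satisfy `2 (d/dx)[p(x,x)] + p_x(x,x) + p_y(x,x) = 0`
and `(d²/dx²)[p(x,x)] + (d/dx)[p_x(x,x)] + p_xx(x,x) - p_yy(x,x) = λ` on `[0,L]`, then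
`p(x,x) = 0` and `p_x(x,x) = (λ/3) x` on `[0,L]`. -/
theorem observer_kernel_diagonal_conditions
    (L lam : ℝ) (hL : 0 < L) (hlam : 0 < lam)
    (p : ℝ → ℝ → ℝ) (hp : ContDiff ℝ 2 (Function.uncurry p))
    (hp0 : ∀ y ∈ Set.Icc (0:ℝ) L, p 0 y = 0)
    (hdiag1 : ∀ x ∈ Set.Icc (0:ℝ) L,
      2 * deriv (fun s => p s s) x + deriv (fun s => p s x) x + deriv (fun r => p x r) x = 0)
    (hdiag2 : ∀ x ∈ Set.Icc (0:ℝ) L,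
      iteratedDeriv 2 (fun s => p s s) x
        + deriv (fun s => deriv (fun a => p a s) s) x
        + iteratedDeriv 2 (fun s => p s x) x
        - iteratedDeriv 2 (fun r => p x r) x = lam) :
    (∀ x ∈ Set.Icc (0:ℝ) L, p x x = 0) ∧
    (∀ x ∈ Set.Icc (0:ℝ) L, deriv (fun s => p s x) x = lam / 3 * x) :=
  observer_kernel_diagonal_conditions_general L lam hL p hp hp0 hdiag1 hdiag2
end

section
/- Let L > 0 and λ > 0, and let p : ℝ × ℝ → ℝ be a C³ function which on the triangle T = {(x,y) : 0 ≤ x ≤ L, x ≤ y ≤ L} satisfies p_{xxx} + p_{yyy} + p_x + p_y = λ p, p(x,x) = 0 and p_x(x,x) = (λ/3)·x for x ∈ [0,L], and p(0,y) = 0 for y ∈ [0,L]. Define F : ℝ × ℝ → ℝ by F(s,r) = p(L − r, L − s). Then F satisfies, on T: F_{sss} + F_{rrr} + F_s + F_r = −λ F; F(s,s) = 0 for s ∈ [0,L]; F_s(s,s) = (λ/3)(L − s) for s ∈ [0,L]; and F(s,L) = 0 for s ∈ [0,L]. -/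
/-!
Substituting `s = L - y`, `r = L - x` reverses the sign of every first- and third-order partial
derivative, so the odd operator `∂ₓ³ + ∂ᵧ³ + ∂ₓ + ∂ᵧ` changes sign and `λ` becomes `-λ`; the
boundary conditions `p(x,x) = 0` and `p(0,y) = 0` are carried to `F(s,s) = 0` and `F(s,L) = 0`.
For the slope on the diagonal, differentiating `p(t,t) = 0` gives `p_x + p_y = 0` there, so
`F_s(s,s) = -p_y(L-s, L-s) = p_x(L-s, L-s) = (λ/3)(L-s)`.
-/

open Set

noncomputable def kernelOperator (p : ℝ → ℝ → ℝ) (x y : ℝ) : ℝ :=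
  iteratedDeriv 3 (fun s => p s y) x + iteratedDeriv 3 (fun r => p x r) y
    + deriv (fun s => p s y) x + deriv (fun r => p x r) y

theorem kernelOperator_reflect (p : ℝ → ℝ → ℝ) (L s r : ℝ) :
    kernelOperator (fun s r => p (L - r) (L - s)) s r = -kernelOperator p (L - r) (L - s) := by
  have h3s := congrFun (iteratedDeriv_comp_const_sub 3 (fun b => p (L - r) b) L) s
  have h3r := congrFun (iteratedDeriv_comp_const_sub 3 (fun a => p a (L - s)) L) r
  have h1s := deriv_comp_const_sub (f := fun b => p (L - r) b) (a := L) (x := s)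
  have h1r := deriv_comp_const_sub (f := fun a => p a (L - s)) (a := L) (x := r)
  simp only [kernelOperator]
  rw [h3s, h3r, h1s, h1r]
  norm_num
  ring

section Diagonal

variable {E : Type*} [NormedAddCommGroup E] [NormedSpace ℝ E] {p : ℝ → ℝ → E}

theorem hasDerivAt_uncurry_left {x y : ℝ} (h : DifferentiableAt ℝ (Function.uncurry p) (x, y)) :
    HasDerivAt (fun s => p s y) (fderiv ℝ (Function.uncurry p) (x, y) (1, 0)) x :=
  h.hasFDerivAt.comp_hasDerivAt (f := fun t => (t, y)) x
    ((hasDerivAt_id x).prodMk (hasDerivAt_const x y))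

theorem hasDerivAt_uncurry_right {x y : ℝ} (h : DifferentiableAt ℝ (Function.uncurry p) (x, y)) :
    HasDerivAt (fun r => p x r) (fderiv ℝ (Function.uncurry p) (x, y) (0, 1)) y :=
  h.hasFDerivAt.comp_hasDerivAt (f := fun t => (x, t)) y
    ((hasDerivAt_const y x).prodMk (hasDerivAt_id y))

theorem hasDerivAt_uncurry_diag {x : ℝ} (h : DifferentiableAt ℝ (Function.uncurry p) (x, x)) :
    HasDerivAt (fun t => p t t) (deriv (fun s => p s x) x + deriv (fun r => p x r) x) x := by
  rw [(hasDerivAt_uncurry_left h).deriv, (hasDerivAt_uncurry_right h).deriv, ← map_add,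
    Prod.mk_add_mk, add_zero, zero_add]
  exact h.hasFDerivAt.comp_hasDerivAt (f := fun t => (t, t)) x
    ((hasDerivAt_id x).prodMk (hasDerivAt_id x))

theorem deriv_left_add_deriv_right_eq_zero {a b x : ℝ} (hab : a < b) (hx : x ∈ Icc a b)
    (h : DifferentiableAt ℝ (Function.uncurry p) (x, x)) (hdiag : ∀ t ∈ Icc a b, p t t = 0) :
    deriv (fun s => p s x) x + deriv (fun r => p x r) x = 0 := by
  have hzero : HasDerivWithinAt (fun t => p t t) 0 (Icc a b) x :=
    (hasDerivWithinAt_const x _ 0).congr hdiag (hdiag x hx)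
  exact (uniqueDiffOn_Icc hab x hx).eq_deriv _ (hasDerivAt_uncurry_diag h).hasDerivWithinAt hzero

end Diagonal

theorem sub_mem_Icc_zero_of_mem {α : Type*} [AddCommGroup α] [PartialOrder α]
    [IsOrderedAddMonoid α] {L s : α} (hs : s ∈ Icc 0 L) : L - s ∈ Icc 0 L :=
  sub_mem_Icc_iff_right.mpr (by simpa using hs)

theorem observer_kernel_change_of_variables_general
    (L lam : ℝ) (hL : 0 < L)
    (p : ℝ → ℝ → ℝ) (hp : ContDiff ℝ 3 (Function.uncurry p))
    (hppde : ∀ x y : ℝ, (x, y) ∈ {q : ℝ × ℝ | 0 ≤ q.1 ∧ q.1 ≤ L ∧ q.1 ≤ q.2 ∧ q.2 ≤ L} →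
      iteratedDeriv 3 (fun s => p s y) x + iteratedDeriv 3 (fun r => p x r) y
        + deriv (fun s => p s y) x + deriv (fun r => p x r) y = lam * p x y)
    (hpdiag : ∀ x ∈ Set.Icc (0:ℝ) L, p x x = 0)
    (hpxdiag : ∀ x ∈ Set.Icc (0:ℝ) L, deriv (fun s => p s x) x = lam / 3 * x)
    (hp0 : ∀ y ∈ Set.Icc (0:ℝ) L, p 0 y = 0)
    (F : ℝ → ℝ → ℝ) (hFdef : ∀ s r : ℝ, F s r = p (L - r) (L - s)) :
    (∀ s r : ℝ, (s, r) ∈ {q : ℝ × ℝ | 0 ≤ q.1 ∧ q.1 ≤ L ∧ q.1 ≤ q.2 ∧ q.2 ≤ L} →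
      iteratedDeriv 3 (fun a => F a r) s + iteratedDeriv 3 (fun b => F s b) r
        + deriv (fun a => F a r) s + deriv (fun b => F s b) r = -lam * F s r) ∧
    (∀ s ∈ Set.Icc (0:ℝ) L, F s s = 0) ∧
    (∀ s ∈ Set.Icc (0:ℝ) L, deriv (fun a => F a s) s = lam / 3 * (L - s)) ∧
    (∀ s ∈ Set.Icc (0:ℝ) L, F s L = 0) := by
  obtain rfl : F = fun s r => p (L - r) (L - s) := funext₂ hFdef
  refine ⟨fun s r ⟨hs0, hsL, hsr, hrL⟩ => ?_, fun s hs => hpdiag _ (sub_mem_Icc_zero_of_mem hs),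
    fun s hs => ?_, fun s hs => by simpa using hp0 _ (sub_mem_Icc_zero_of_mem hs)⟩
  · have hpde : kernelOperator p (L - r) (L - s) = lam * p (L - r) (L - s) :=
      hppde _ _ ⟨by linarith, by linarith, by linarith, by linarith⟩
    calc _ = -kernelOperator p (L - r) (L - s) := kernelOperator_reflect p L s r
      _ = _ := by rw [hpde, neg_mul]
  · have hcancel := deriv_left_add_deriv_right_eq_zero hL (sub_mem_Icc_zero_of_mem hs)
      (hp.differentiable (by norm_num) _) hpdiag
    calc _ = -deriv (fun b => p (L - s) b) (L - s) := deriv_comp_const_sub ..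
      _ = deriv (fun a => p a (L - s)) (L - s) := by linarith
      _ = _ := hpxdiag _ (sub_mem_Icc_zero_of_mem hs)

/-- The change of variables `F(s,r) = p(L-r, L-s)` maps the observer kernel system for `p`
into the state-feedback kernel system (with the sign `-λ`): `F` satisfies
`F_sss + F_rrr + F_s + F_r = -λ F` on the triangle, `F(s,s) = 0`,
`F_s(s,s) = (λ/3)(L-s)`, and `F(s,L) = 0` for `s ∈ [0,L]`. -/
theorem observer_kernel_change_of_variables
    (L lam : ℝ) (hL : 0 < L) (hlam : 0 < lam)
    (p : ℝ → ℝ → ℝ) (hp : ContDiff ℝ 3 (Function.uncurry p))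
    (hppde : ∀ x y : ℝ, (x, y) ∈ {q : ℝ × ℝ | 0 ≤ q.1 ∧ q.1 ≤ L ∧ q.1 ≤ q.2 ∧ q.2 ≤ L} →
      iteratedDeriv 3 (fun s => p s y) x + iteratedDeriv 3 (fun r => p x r) y
        + deriv (fun s => p s y) x + deriv (fun r => p x r) y = lam * p x y)
    (hpdiag : ∀ x ∈ Set.Icc (0:ℝ) L, p x x = 0)
    (hpxdiag : ∀ x ∈ Set.Icc (0:ℝ) L, deriv (fun s => p s x) x = lam / 3 * x)
    (hp0 : ∀ y ∈ Set.Icc (0:ℝ) L, p 0 y = 0)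
    (F : ℝ → ℝ → ℝ) (hFdef : ∀ s r : ℝ, F s r = p (L - r) (L - s)) :
    (∀ s r : ℝ, (s, r) ∈ {q : ℝ × ℝ | 0 ≤ q.1 ∧ q.1 ≤ L ∧ q.1 ≤ q.2 ∧ q.2 ≤ L} →
      iteratedDeriv 3 (fun a => F a r) s + iteratedDeriv 3 (fun b => F s b) r
        + deriv (fun a => F a r) s + deriv (fun b => F s b) r = -lam * F s r) ∧
    (∀ s ∈ Set.Icc (0:ℝ) L, F s s = 0) ∧
    (∀ s ∈ Set.Icc (0:ℝ) L, deriv (fun a => F a s) s = lam / 3 * (L - s)) ∧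
    (∀ s ∈ Set.Icc (0:ℝ) L, F s L = 0) :=
  observer_kernel_change_of_variables_general L lam hL p hp hppde hpdiag hpxdiag hp0 F hFdef
end
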